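/- arXiv:1511.08975 — 5 statements merged into one kernel-verified Lean document; each statement's English description precedes it below -/
import Mathlib

section
/- Let x̂ : ℤ → ℂ and r ≥ 1. Suppose there exists a nonzero filter h = (h[0],…,h[r]) ∈ ℂ^{r+1} such that ∑_{l=0}^{r} h[l]·x̂[k−l] = 0 for every k ∈ ℤ, and that no nonzero filter of length at most r annihilates x̂ in this sense (so r+1 is the minimum length of an annihilating filter of x̂). Let n and d satisfy min{n−d+1, d} > r. Then the Hankel matrix 𝓗(x̂) ∈ ℂ^{(n−d+1)×d} built from (x̂[0],…,x̂[n−1]) has rank exactly r. -/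
/-!
Minimality of `r + 1` forces both end coefficients `h 0` and `h r` to be nonzero, so the
recurrence defined by `h` can be run forwards and backwards: a solution vanishing at `r`
consecutive times vanishes identically. Column `j` of the Hankel matrix is the window
`0, …, n - d` of the shifted sequence `x̂(· + j)`. All shifts lie in the span of the first `r`
of them, which are linearly independent (a dependency would be an annihilating filter of
length `r`), and restriction to a window longer than `r` is injective on solutions. Hence the
column space has dimension `r`.
-/

open Matrix

/-- Hankel matrix in `ℂ^{(n-d+1)×d}` built from the samples `x[0],…,x[n-1]` of a
two-sided sequence `x : ℤ → ℂ`. -/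
noncomputable def hankelZ (n d : ℕ) (x : ℤ → ℂ) : Matrix (Fin (n - d + 1)) (Fin d) ℂ :=
  fun i j => x ((i.val + j.val : ℕ) : ℤ)

open Finset Set Submodule Module

namespace AnnihilatingFilter

section CommRing

variable {K : Type*} [CommRing K]

def annihilatedBy {s : ℕ} (h : Fin s → K) : Submodule K (ℤ → K) where
  carrier := {x | ∀ k : ℤ, ∑ l : Fin s, h l * x (k - ((l : ℕ) : ℤ)) = 0}
  zero_mem' := by simp
  add_mem' hx hy k := by simp [mul_add, sum_add_distrib, hx k, hy k]
  smul_mem' c x hx k := by simp [mul_left_comm _ c, ← mul_sum, hx k]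

def shift (j : ℤ) (x : ℤ → K) : ℤ → K := fun t => x (t + j)

def window (N : ℕ) : (ℤ → K) →ₗ[K] (Fin N → K) :=
  LinearMap.funLeft K K fun i : Fin N => ((i : ℕ) : ℤ)

variable {s : ℕ} {h : Fin s → K} {x : ℤ → K}

lemma shift_mem_annihilatedBy (hx : x ∈ annihilatedBy h) (j : ℤ) :
    shift j x ∈ annihilatedBy h := fun k => by
  simpa only [shift, sub_add_eq_add_sub] using hx (k + j)

lemma reverse_mem_annihilatedBy (hx : x ∈ annihilatedBy h) (c : ℤ) :
    (fun t => x (c - t)) ∈ annihilatedBy (fun l => h l.rev) := fun k => by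
  refine (Fintype.sum_equiv Fin.revPerm _ _ fun l => ?_).trans (hx (c - k + (s - 1)))
  simp only [Fin.revPerm_apply, Fin.val_rev]
  have := l.isLt
  congr 2
  omega

end CommRing

section Field

variable {K : Type*} [Field K] {r : ℕ} {h : Fin (r + 1) → K} {x y : ℤ → K}

lemma eq_neg_inv_mul_sum (hy : y ∈ annihilatedBy h) (h0 : h 0 ≠ 0) (k : ℤ) :
    y k = -(h 0)⁻¹ * ∑ l : Fin r, h l.succ * y (k - ((l : ℕ) + 1 : ℕ)) := by
  have := hy k
  rw [Fin.sum_univ_succ] at this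
  simp only [Fin.val_zero, Nat.cast_zero, sub_zero, Fin.val_succ] at this
  field_simp
  linear_combination this

lemma apply_natCast_eq_zero_of_window (hy : y ∈ annihilatedBy h) (h0 : h 0 ≠ 0)
    (hwin : ∀ i : ℕ, i < r → y i = 0) (m : ℕ) : y m = 0 := by
  induction m using Nat.strong_induction_on with
  | _ m ih =>
    rcases lt_or_ge m r with hm | hm
    · exact hwin m hm
    rw [eq_neg_inv_mul_sum hy h0, sum_eq_zero fun l _ => ?_, mul_zero]
    have := l.isLt
    rw [← Nat.cast_sub (by omega), ih _ (by omega), mul_zero]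

lemma eq_zero_of_window (hy : y ∈ annihilatedBy h) (h0 : h 0 ≠ 0) (hlast : h (Fin.last r) ≠ 0)
    (hwin : ∀ i : ℕ, i < r → y i = 0) : y = 0 := by
  funext t
  rcases le_or_gt 0 t with ht | ht
  · lift t to ℕ using ht
    exact apply_natCast_eq_zero_of_window hy h0 hwin t
  · -- negative times: run the recurrence forwards on the time-reversed sequence
    obtain ⟨m, rfl⟩ : ∃ m : ℕ, t = (r - 1 : ℤ) - m := ⟨(r - 1 - t).toNat, by omega⟩
    have hrev := reverse_mem_annihilatedBy hy (r - 1)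
    refine apply_natCast_eq_zero_of_window hrev (by simpa using hlast) (fun i hi => ?_) m
    rw [← hwin (r - 1 - i) (by omega)]
    congr 1
    omega

lemma head_ne_zero (hx : x ∈ annihilatedBy h) (hh : h ≠ 0)
    (hmin : ∀ h' : Fin r → K, x ∈ annihilatedBy h' → h' = 0) : h 0 ≠ 0 := by
  intro h0
  have htail : Fin.tail h = 0 := hmin _ fun k => by
    have := hx (k + 1)
    rw [Fin.sum_univ_succ, h0, zero_mul, zero_add] at this
    simpa [Fin.tail, sub_add_eq_sub_sub_swap, add_sub_cancel_right] using this
  refine hh (funext fun l => ?_)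
  cases l using Fin.cases with
  | zero => exact h0
  | succ l => exact congrFun htail l

lemma last_ne_zero (hx : x ∈ annihilatedBy h) (hh : h ≠ 0)
    (hmin : ∀ h' : Fin r → K, x ∈ annihilatedBy h' → h' = 0) : h (Fin.last r) ≠ 0 := by
  intro hl
  have hinit : Fin.init h = 0 := hmin _ fun k => by
    have := hx k
    rw [Fin.sum_univ_castSucc, hl, zero_mul, add_zero] at this
    simpa [Fin.init] using this
  refine hh (funext fun l => ?_)
  cases l using Fin.lastCases with
  | last => exact hl
  | cast l => exact congrFun hinit l

lemma linearIndependent_shift (hmin : ∀ h' : Fin r → K, x ∈ annihilatedBy h' → h' = 0) :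
    LinearIndependent K fun j : Fin r => shift j x := by
  rw [Fintype.linearIndependent_iff]
  intro c hc j
  have hrev : (fun l : Fin r => c l.rev) = 0 := hmin _ fun k => by
    have hk := congrFun hc (k - (r - 1))
    rw [Finset.sum_apply] at hk
    refine (Fintype.sum_equiv Fin.revPerm _ _ fun l => ?_).trans hk
    simp only [Fin.revPerm_apply, Fin.val_rev, shift, Pi.smul_apply, smul_eq_mul]
    have := l.isLt
    congr 2
    omega
  simpa using congrFun hrev j.rev

lemma shift_mem_span_shift (hx : x ∈ annihilatedBy h) (h0 : h 0 ≠ 0) (m : ℕ) :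
    shift m x ∈ span K (range fun j : Fin r => shift j x) := by
  induction m using Nat.strong_induction_on with
  | _ m ih =>
    rcases lt_or_ge m r with hm | hm
    · exact subset_span ⟨⟨m, hm⟩, rfl⟩
    have hrec :
        shift m x = -(h 0)⁻¹ • ∑ l : Fin r, h l.succ • shift ((m - (l + 1) : ℕ) : ℤ) x := by
      funext t
      simp only [shift, Pi.smul_apply, Finset.sum_apply, smul_eq_mul]
      rw [eq_neg_inv_mul_sum hx h0 (t + m)]
      congr 2 with l
      have := l.isLt
      congr 2
      omega
    rw [hrec]
    exact smul_mem _ _ (sum_mem fun l _ => smul_mem _ _ (ih _ (by omega)))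

lemma span_shift_le_annihilatedBy (hx : x ∈ annihilatedBy h) :
    span K (range fun j : Fin r => shift j x) ≤ annihilatedBy h :=
  span_le.mpr <| by
    rintro _ ⟨j, rfl⟩
    exact shift_mem_annihilatedBy hx j

lemma finrank_span_window_shift (hx : x ∈ annihilatedBy h) (hh : h ≠ 0)
    (hmin : ∀ h' : Fin r → K, x ∈ annihilatedBy h' → h' = 0) {N d : ℕ} (hN : r < N)
    (hd : r ≤ d) :
    finrank K (span K (range fun j : Fin d => window N (shift j x))) = r := by
  have h0 := head_ne_zero hx hh hmin
  set W := span K (range fun j : Fin r => shift j x)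
  have hspan : span K (range fun j : Fin d => window N (shift j x)) = W.map (window N) := by
    apply le_antisymm
    · rw [span_le]
      rintro _ ⟨j, rfl⟩
      exact mem_map_of_mem (shift_mem_span_shift hx h0 j)
    · rw [map_span, span_le]
      rintro _ ⟨_, ⟨j, rfl⟩, rfl⟩
      exact subset_span ⟨Fin.castLE hd j, rfl⟩
  have hinj : Disjoint W (LinearMap.ker (window N)) := by
    rw [disjoint_def]
    intro y hyW hyN
    refine eq_zero_of_window (span_shift_le_annihilatedBy hx hyW) h0
      (last_ne_zero hx hh hmin) fun i hi => ?_
    exact congrFun hyN ⟨i, by omega⟩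
  rw [hspan, map_span, ← range_comp,
    finrank_span_eq_card ((linearIndependent_shift hmin).map hinj), Fintype.card_fin]

end Field

end AnnihilatingFilter

open AnnihilatingFilter

theorem hankel_rank_eq_of_min_annihilating_filter_general
    (xh : ℤ → ℂ) (r n d : ℕ)
    (h : Fin (r + 1) → ℂ) (hh0 : h ≠ 0)
    (hann : ∀ k : ℤ, ∑ l : Fin (r + 1), h l * xh (k - ((l : ℕ) : ℤ)) = 0)
    (hmin : ∀ s : ℕ, s ≤ r → ∀ h' : Fin s → ℂ,
      (∀ k : ℤ, ∑ l : Fin s, h' l * xh (k - ((l : ℕ) : ℤ)) = 0) → h' = 0)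
    (h1 : r < n - d + 1) (h2 : r < d) :
    (hankelZ n d xh).rank = r := by
  have hcol : (hankelZ n d xh).col = fun j : Fin d => window (n - d + 1) (shift j xh) := by
    ext j i
    simp [hankelZ, window, shift, Matrix.col]
  rw [rank_eq_finrank_span_cols, hcol]
  exact finrank_span_window_shift hann hh0 (hmin r le_rfl) h1 h2.le

/-- If `r+1` is the minimum length of a (two-sided) annihilating filter
of `x̂ : ℤ → ℂ` and `min{n-d+1, d} > r`, then the Hankel matrix built from
`x̂[0],…,x̂[n-1]` has rank exactly `r`. -/
theorem hankel_rank_eq_of_min_annihilating_filter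
    (xh : ℤ → ℂ) (r n d : ℕ) (hr : 1 ≤ r)
    (h : Fin (r + 1) → ℂ) (hh0 : h ≠ 0)
    (hann : ∀ k : ℤ, ∑ l : Fin (r + 1), h l * xh (k - ((l : ℕ) : ℤ)) = 0)
    (hmin : ∀ s : ℕ, s ≤ r → ∀ h' : Fin s → ℂ,
      (∀ k : ℤ, ∑ l : Fin s, h' l * xh (k - ((l : ℕ) : ℤ)) = 0) → h' = 0)
    (hd : d ≤ n) (h1 : r < n - d + 1) (h2 : r < d) :
    (hankelZ n d xh).rank = r :=
  hankel_rank_eq_of_min_annihilating_filter_general xh r n d h hh0 hann hmin h1 h2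
end

section
/- Let x̂ ∈ ℂⁿ (indexed by {0,…,n−1}) and suppose there exists a nonzero filter h = (h[0],…,h[r]) ∈ ℂ^{r+1} such that ∑_{l=0}^{r} h[l]·x̂[k−l] = 0 for every integer k with r ≤ k ≤ n−1. If d satisfies r < d ≤ n, then the Hankel matrix 𝓗(x̂) ∈ ℂ^{(n−d+1)×d} has rank at most r. -/
open Matrix

/-- Hankel matrix `𝓗(x) ∈ ℂ^{(n-d+1)×d}` with entries `𝓗(x)_{i,j} = x[i+j]`. -/
noncomputable def hankel (n d : ℕ) (x : Fin n → ℂ) : Matrix (Fin (n - d + 1)) (Fin d) ℂ :=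
  fun i j => if h : i.val + j.val < n then x ⟨i.val + j.val, h⟩ else 0

/-! Read backwards, the filter is a nonzero polynomial `p = ∑ h[l] X^(r-l)` of degree at most `r`,
and the annihilation relations say that the coefficient vector of `X^s p` lies in the kernel of
the Hankel matrix whenever `s + r < d`. Multiplication by `p` is injective on polynomials of degree
`< d - r` and lands in degree `< d`, where taking the first `d` coefficients is injective; so the
kernel has dimension at least `d - r` and rank–nullity gives rank at most `r`. -/

open Polynomial

namespace Polynomial

variable (R : Type*) [Semiring R]

noncomputable def coeffVec (d : ℕ) : R[X] →ₗ[R] Fin d → R :=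
  LinearMap.pi fun j => lcoeff R j

variable {R}

@[simp]
theorem coeffVec_apply (d : ℕ) (q : R[X]) (j : Fin d) : coeffVec R d q j = q.coeff j := rfl

theorem coeffVec_monomial {d k : ℕ} (hk : k < d) (a : R) :
    coeffVec R d (monomial k a) = Pi.single ⟨k, hk⟩ a := by
  ext j
  simp [coeff_monomial, Pi.single_apply, Fin.ext_iff, eq_comm]

theorem eq_zero_of_mem_degreeLT_of_coeffVec_eq_zero {d : ℕ} {q : R[X]} (hq : q ∈ degreeLT R d)
    (h : coeffVec R d q = 0) : q = 0 :=
  (degreeLTEquiv_eq_zero_iff_eq_zero hq).mp h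

theorem mul_mem_degreeLT {p q : R[X]} {r d : ℕ} (hp : p.natDegree ≤ r)
    (hq : q ∈ degreeLT R (d - r)) : p * q ∈ degreeLT R d := by
  rcases eq_or_ne (p * q) 0 with hpq | hpq
  · simp [hpq]
  rw [mem_degreeLT, ← natDegree_lt_iff_degree_lt (right_ne_zero_of_mul hpq)] at hq
  rw [mem_degreeLT, ← natDegree_lt_iff_degree_lt hpq]
  exact natDegree_mul_le.trans_lt (by omega)

end Polynomial

theorem Matrix.rank_le_of_mulVec_coeffVec_eq_zero {K m : Type*} [Field K] {d r : ℕ}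
    (A : Matrix m (Fin d) K) {p : K[X]} (hp : p ≠ 0) (hpr : p.natDegree ≤ r)
    (hA : ∀ s, s + r < d → A *ᵥ coeffVec K d (X ^ s * p) = 0) : A.rank ≤ r := by
  classical
  let f : degreeLT K (d - r) →ₗ[K] Fin d → K :=
    coeffVec K d ∘ₗ LinearMap.mulLeft K p ∘ₗ (degreeLT K (d - r)).subtype
  have hf : Function.Injective f := by
    refine (injective_iff_map_eq_zero f).mpr fun q hq ↦ ?_
    have hpq := eq_zero_of_mem_degreeLT_of_coeffVec_eq_zero (mul_mem_degreeLT hpr q.2) hq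
    simpa [hp] using hpq
  have hfA : LinearMap.range f ≤ LinearMap.ker A.mulVecLin := by
    have hker : degreeLT K (d - r) ≤
        LinearMap.ker (A.mulVecLin ∘ₗ coeffVec K d ∘ₗ LinearMap.mulLeft K p) := by
      rw [degreeLT_eq_span_X_pow, Submodule.span_le, Finset.coe_image, Set.image_subset_iff]
      intro s hs
      simpa [mul_comm] using hA s (by simp at hs; omega)
    rintro _ ⟨q, rfl⟩
    exact hker q.2
  have hdim : Module.finrank K (degreeLT K (d - r)) = d - r := by
    simp [(degreeLTEquiv K (d - r)).finrank_eq]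
  have hkerDim : d - r ≤ Module.finrank K (LinearMap.ker A.mulVecLin) := by
    simpa [LinearMap.finrank_range_of_inj hf, hdim] using Submodule.finrank_mono hfA
  have hrankNullity := LinearMap.finrank_range_add_finrank_ker A.mulVecLin
  rw [Module.finrank_fin_fun] at hrankNullity
  rw [Matrix.rank]
  omega

noncomputable def filterPoly {R : Type*} [Semiring R] {r : ℕ} (h : Fin (r + 1) → R) : R[X] :=
  ∑ l : Fin (r + 1), monomial (r - l) (h l)

section filterPoly

variable {R : Type*} [Semiring R] {r : ℕ} (h : Fin (r + 1) → R)

theorem natDegree_filterPoly_le : (filterPoly h).natDegree ≤ r :=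
  natDegree_sum_le_of_forall_le _ _ fun _ _ ↦ (natDegree_monomial_le _).trans (Nat.sub_le _ _)

theorem coeff_filterPoly_sub (l : Fin (r + 1)) : (filterPoly h).coeff (r - l) = h l := by
  have hinj : ∀ k : Fin (r + 1), r - (k : ℕ) = r - l ↔ k = l := fun k ↦ by omega
  simp [filterPoly, finsetSum_coeff, coeff_monomial, hinj]

theorem filterPoly_ne_zero (hh : h ≠ 0) : filterPoly h ≠ 0 := by
  obtain ⟨l, hl⟩ := Function.ne_iff.mp hh
  exact fun h0 ↦ hl (by simpa [h0] using (coeff_filterPoly_sub h l).symm)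

theorem X_pow_mul_filterPoly (s : ℕ) :
    X ^ s * filterPoly h = ∑ l : Fin (r + 1), monomial (s + r - l) (h l) := by
  simp only [filterPoly, Finset.mul_sum, X_pow_mul_monomial]
  refine Finset.sum_congr rfl fun l _ ↦ ?_
  rw [show r - (l : ℕ) + s = s + r - l by omega]

end filterPoly

theorem hankel_mulVec_coeffVec_X_pow_mul_filterPoly {n d r : ℕ} (x : Fin n → ℂ)
    (h : Fin (r + 1) → ℂ)
    (hann : ∀ k : ℕ, r ≤ k → ∀ hk : k < n,
      ∑ l : Fin (r + 1), h l * x ⟨k - l, (k.sub_le l).trans_lt hk⟩ = 0)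
    (hdn : d ≤ n) {s : ℕ} (hs : s + r < d) :
    hankel n d x *ᵥ coeffVec ℂ d (X ^ s * filterPoly h) = 0 := by
  ext i
  have hmono (l : Fin (r + 1)) : coeffVec ℂ d (monomial (s + r - l) (h l)) =
      Pi.single ⟨s + r - l, by omega⟩ (h l) :=
    coeffVec_monomial _ _
  rw [X_pow_mul_filterPoly, map_sum]
  simp only [hmono, mulVec_sum, mulVec_single]
  have hi := i.isLt
  simp only [hankel, Finset.sum_apply, Pi.smul_apply, col_apply, op_smul_eq_smul, smul_eq_mul,
    mul_dite, mul_zero, Pi.zero_apply]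
  refine (Finset.sum_congr rfl fun l _ ↦ ?_).trans (hann (i + s + r) (by omega) (by omega))
  have hl := l.isLt
  rw [dif_pos (by omega)]
  congr 2
  rw [Fin.mk.injEq]
  omega

/-- If some nonzero filter of length `r+1` annihilates the samples
`x̂[0],…,x̂[n−1]` (for `r ≤ k ≤ n−1`) and `r < d ≤ n`, then the Hankel matrix `𝓗(x̂)`
has rank at most `r`. -/
theorem hankel_rank_le_of_annihilating_filter
    (n d r : ℕ) (xh : Fin n → ℂ) (h : Fin (r + 1) → ℂ) (hh0 : h ≠ 0)
    (hann : ∀ k : ℕ, r ≤ k → ∀ hk : k < n,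
      ∑ l : Fin (r + 1), h l * xh ⟨k - (l : ℕ), by omega⟩ = 0)
    (hdn : d ≤ n) :
    (hankel n d xh).rank ≤ r :=
  (hankel n d xh).rank_le_of_mulVec_coeffVec_eq_zero (filterPoly_ne_zero h hh0)
    (natDegree_filterPoly_le h) fun _ hs ↦
      hankel_mulVec_coeffVec_X_pow_mul_filterPoly xh h hann hdn hs
end

section
/- Let p ≥ 1, let λ_0,…,λ_{p−1} ∈ ℂ be distinct and nonzero, let l_0,…,l_{p−1} ≥ 1, let a_{j,l} ∈ ℂ for 0 ≤ l ≤ l_j−1 with leading coefficients a_{j,l_j−1} ≠ 0 for every j, and set r = ∑_{j=0}^{p−1} l_j. Define x̂ ∈ ℂⁿ by x̂[k] = ∑_{j=0}^{p−1} ∑_{l=0}^{l_j−1} a_{j,l}·k^l·λ_j^k for k = 0,…,n−1 (with the convention k⁰ = 1). If min{n−d+1, d} > r, then the Hankel matrix 𝓗(x̂) ∈ ℂ^{(n−d+1)×d} has rank exactly r. -/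
/-!
Write `x̂[k] = ∑ⱼ fⱼ(k) λⱼᵏ` with `deg fⱼ = lⱼ - 1`. Taylor expansion
`fⱼ(i + k) = ∑ₘ iᵐ (Dₘ fⱼ)(k)`, with `Dₘ` the Hasse derivatives, factors `𝓗(x̂) = U Wᵀ` through
`r = ∑ⱼ lⱼ` columns, where `U` has the columns `i ↦ iᵐ λⱼⁱ` and `W` the columns
`k ↦ (Dₘ fⱼ)(k) λⱼᵏ`, `m < lⱼ`. Both have full column rank. A combination of their columns is a
sequence `∑ⱼ gⱼ(i) λⱼⁱ` with `deg gⱼ < lⱼ`; it is annihilated by `∏ⱼ (E - λⱼ)ˡʲ`, where `E` is the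
shift, a monic recurrence of order `r`, so vanishing at the first `r` indices it vanishes
identically. Since the factors `(E - λⱼ)ˡʲ` are pairwise coprime, each term `gⱼ(i) λⱼⁱ` then
vanishes on its own, hence `gⱼ = 0` as `λⱼ ≠ 0`. The coefficient vector is recovered from the `gⱼ`
because the monomials `Xᵐ`, resp. the `Dₘ fⱼ`, have distinct degrees.
-/

open Matrix

open Polynomial Finset

section

variable {K : Type*} [Field K]

noncomputable def seqShift : Module.End K (ℕ → K) := LinearMap.funLeft K K Nat.succ

lemma seqShift_pow_apply (s : ℕ → K) (k i : ℕ) : (seqShift ^ k) s i = s (i + k) := by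
  induction k generalizing s with
  | zero => simp
  | succ k ih => rw [pow_succ, Module.End.mul_apply, ih]; rfl

lemma aeval_seqShift_apply (q : K[X]) (s : ℕ → K) (i : ℕ) :
    aeval seqShift q s i = ∑ k ∈ range (q.natDegree + 1), q.coeff k * s (i + k) := by
  simp [aeval_eq_sum_range, LinearMap.sum_apply, seqShift_pow_apply]

lemma Polynomial.Monic.eq_zero_of_aeval_seqShift_eq_zero {q : K[X]} (hq : q.Monic)
    {s : ℕ → K} (hs : aeval seqShift q s = 0) (hinit : ∀ i < q.natDegree, s i = 0) : s = 0 := by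
  funext i
  induction i using Nat.strong_induction_on with
  | _ i ih =>
    by_cases hi : i < q.natDegree
    · exact hinit i hi
    obtain ⟨t, rfl⟩ : ∃ t, i = t + q.natDegree := ⟨i - q.natDegree, by omega⟩
    have hrec := congrFun hs t
    rw [aeval_seqShift_apply, sum_range_succ, hq.coeff_natDegree, one_mul,
      sum_eq_zero fun k hk => by rw [ih (t + k) (by simp at hk; omega), Pi.zero_apply, mul_zero],
      zero_add] at hrec
    exact hrec

lemma aeval_seqShift_X_sub_C_pow (μ : K) (g : K → K) (L : ℕ) :
    aeval seqShift ((X - C μ) ^ L) (fun i : ℕ => g i * μ ^ i) =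
      fun i : ℕ => ((fwdDiff 1)^[L] g) i * μ ^ (i + L) := by
  induction L with
  | zero => simp
  | succ L ih =>
    funext i
    rw [pow_succ', map_mul, Module.End.mul_apply, ih, Function.iterate_succ_apply']
    simp only [seqShift, aeval_sub, aeval_X, aeval_C, LinearMap.sub_apply,
      Module.algebraMap_end_apply, Pi.sub_apply, LinearMap.funLeft_apply, Nat.succ_eq_add_one,
      Nat.cast_add, Nat.cast_one, Pi.smul_apply, smul_eq_mul, fwdDiff]
    ring

def expPolySeq (f : K[X]) (μ : K) (i : ℕ) : K := f.eval (i : K) * μ ^ i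

lemma aeval_seqShift_expPolySeq_eq_zero {q f : K[X]} {μ : K} {L : ℕ} (hq : (X - C μ) ^ L ∣ q)
    (hf : f.degree < L) : aeval seqShift q (expPolySeq f μ) = 0 := by
  rcases eq_or_ne f 0 with rfl | hf0
  · have h0 : expPolySeq (0 : K[X]) μ = 0 := funext fun i => by simp [expPolySeq]
    rw [h0, map_zero]
  replace hf := (natDegree_lt_iff_degree_lt hf0).mpr hf
  obtain ⟨p, rfl⟩ := hq
  have hann : aeval seqShift ((X - C μ) ^ L) (expPolySeq f μ) = 0 := by
    refine (aeval_seqShift_X_sub_C_pow μ f.eval L).trans (funext fun i => ?_)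
    simp [fwdDiff_iter_eq_zero_of_degree_lt hf]
  rw [mul_comm, map_mul, Module.End.mul_apply, hann, map_zero]

lemma eq_zero_of_expPolySeq_eq_zero [CharZero K] {f : K[X]} {μ : K} (hμ : μ ≠ 0)
    (hf : expPolySeq f μ = 0) : f = 0 := by
  refine eq_zero_of_infinite_isRoot f <| Set.infinite_of_injective_forall_mem
    Nat.cast_injective fun i => ?_
  simpa [expPolySeq, hμ] using congrFun hf i

theorem eq_zero_of_sum_expPolySeq_eq_zero [CharZero K] {ι : Type*} [Fintype ι] {lam : ι → K}
    (hinj : Function.Injective lam) (h0 : ∀ j, lam j ≠ 0) {l : ι → ℕ} {f : ι → K[X]}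
    (hf : ∀ j, (f j).degree < l j) {N : ℕ} (hN : ∑ j, l j ≤ N)
    (hvan : ∀ i < N, ∑ j, expPolySeq (f j) (lam j) i = 0) (j : ι) : f j = 0 := by
  classical
  let s : ι → ℕ → K := fun j => expPolySeq (f j) (lam j)
  have hkill : ∀ j (q : K[X]), (X - C (lam j)) ^ l j ∣ q → aeval seqShift q (s j) = 0 :=
    fun j _ hq => aeval_seqShift_expPolySeq_eq_zero hq (hf j)
  have hsum : ∑ j, s j = 0 := by
    have hmonic : ∀ j ∈ univ, ((X - C (lam j)) ^ l j).Monic := fun j _ => (monic_X_sub_C _).pow _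
    refine (monic_prod_of_monic _ _ hmonic).eq_zero_of_aeval_seqShift_eq_zero ?_ fun i hi => ?_
    · rw [map_sum]
      exact sum_eq_zero fun j _ => hkill j _ (dvd_prod_of_mem _ (mem_univ j))
    · rw [natDegree_prod_of_monic _ _ hmonic] at hi
      have hvan_i := hvan i (by simp only [natDegree_pow, natDegree_X_sub_C, mul_one] at hi; omega)
      rw [← hvan_i, Finset.sum_apply]
  let q := ∏ i ∈ univ.erase j, (X - C (lam i)) ^ l i
  have hcop : IsCoprime q ((X - C (lam j)) ^ l j) :=
    IsCoprime.prod_left fun i hi => ((pairwise_coprime_X_sub_C hinj) (ne_of_mem_erase hi)).pow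
  have hq : s j ∈ LinearMap.ker (aeval seqShift q) := by
    have hj : s j = -∑ i ∈ univ.erase j, s i := by
      rw [← add_sum_erase _ _ (mem_univ j)] at hsum
      exact eq_neg_of_add_eq_zero_left hsum
    rw [LinearMap.mem_ker, hj, map_neg, map_sum, sum_eq_zero fun i hi =>
      hkill i q (dvd_prod_of_mem _ hi), neg_zero]
  have hs : s j = 0 := by
    have hdisj := disjoint_ker_aeval_of_isCoprime seqShift hcop
    rw [Submodule.disjoint_def] at hdisj
    exact hdisj (s j) hq (hkill j _ dvd_rfl)
  exact eq_zero_of_expPolySeq_eq_zero (h0 j) hs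

lemma linearIndependent_of_injective_natDegree {ι : Type*} {v : ι → K[X]} (hv : ∀ i, v i ≠ 0)
    (hdeg : Function.Injective fun i => (v i).natDegree) : LinearIndependent K v := by
  rw [linearIndependent_iff']
  intro s g hsum i hi
  have hdisj : Set.Pairwise {i | i ∈ s ∧ g i • v i ≠ 0}
      (Function.onFun Ne fun i => (g i • v i).degree) := by
    rintro a ⟨-, ha⟩ b ⟨-, hb⟩ hab
    rw [smul_ne_zero_iff] at ha hb
    simp only [Function.onFun, smul_eq_C_mul, degree_C_mul ha.1, degree_C_mul hb.1,
      degree_eq_natDegree (hv a), degree_eq_natDegree (hv b), ne_eq, Nat.cast_inj]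
    exact hdeg.ne hab
  have hbot := degree_sum_eq_of_disjoint _ s hdisj
  rw [hsum, degree_zero, eq_comm, Finset.sup_eq_bot_iff] at hbot
  simpa [hv i] using hbot i hi

lemma linearIndependent_hasseDeriv [CharZero K] {f : K[X]} (hf : f ≠ 0) {l : ℕ}
    (hl : l ≤ f.natDegree + 1) :
    LinearIndependent K fun m : Fin l => hasseDeriv m f := by
  refine linearIndependent_of_injective_natDegree (fun m hm => ?_) fun m m' h => ?_
  · have := congrArg (coeff · (f.natDegree - m)) hm
    simp [hasseDeriv_coeff, Nat.sub_add_cancel (by omega : (m : ℕ) ≤ f.natDegree)] at this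
    exact this.elim (Nat.choose_eq_zero_iff.not.mpr (by omega)) hf
  · simp only [natDegree_hasseDeriv] at h
    exact Fin.ext (by omega)

variable {ι : Type*}

/-- With `v j m = Xᵐ` this is the confluent Vandermonde matrix of the nodes `lam j` with
multiplicities `l j`. -/
def expPolyMatrix (N : ℕ) (lam : ι → K) {l : ι → ℕ} (v : (j : ι) → Fin (l j) → K[X]) :
    Matrix (Fin N) ((j : ι) × Fin (l j)) K :=
  fun i jm => expPolySeq (v jm.1 jm.2) (lam jm.1) i

theorem mulVec_expPolyMatrix_injective [CharZero K] [Fintype ι] {lam : ι → K}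
    (hinj : Function.Injective lam) (h0 : ∀ j, lam j ≠ 0) {l : ι → ℕ}
    {v : (j : ι) → Fin (l j) → K[X]} (hv : ∀ j, LinearIndependent K (v j))
    (hdeg : ∀ j m, (v j m).degree < l j) {N : ℕ} (hN : ∑ j, l j ≤ N) :
    Function.Injective (expPolyMatrix N lam v).mulVec := by
  suffices ∀ c, expPolyMatrix N lam v *ᵥ c = 0 → c = 0 from
    fun c c' h => sub_eq_zero.mp (this _ (by rw [mulVec_sub, h, sub_self]))
  intro c hc
  have hcomb := eq_zero_of_sum_expPolySeq_eq_zero hinj h0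
    (f := fun j => ∑ m, c ⟨j, m⟩ • v j m) (fun j => ?_) hN fun i hi => ?_
  · funext ⟨j, m⟩
    exact Fintype.linearIndependent_iff.mp (hv j) _ (hcomb j) m
  · exact (degree_sum_le _ _).trans_lt <| (Finset.sup_lt_iff (WithBot.bot_lt_coe _)).mpr
      fun m _ => (degree_smul_le _ _).trans_lt (hdeg j m)
  · have hci := congrFun hc ⟨i, hi⟩
    rw [Pi.zero_apply] at hci
    rw [← hci]
    simp [expPolyMatrix, expPolySeq, mulVec, dotProduct, Fintype.sum_sigma, eval_finsetSum,
      Finset.mul_sum, mul_assoc, mul_comm]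

end

lemma Matrix.rank_mul_eq_right_of_mulVec_injective {R m n o : Type*} [CommRing R] [Fintype n]
    [Fintype o] (A : Matrix m n R) (B : Matrix n o R) (hA : Function.Injective A.mulVec) :
    (A * B).rank = B.rank := by
  rw [rank, rank, mulVecLin_mul, LinearMap.range_comp,
    ← (Submodule.equivMapOfInjective A.mulVecLin hA _).finrank_eq]

lemma Matrix.rank_eq_card_of_mulVec_injective {R m n : Type*} [CommRing R] [StrongRankCondition R]
    [Fintype n] (A : Matrix m n R) (hA : Function.Injective A.mulVec) :
    A.rank = Fintype.card n := by
  rw [rank, LinearMap.finrank_range_of_inj hA, Module.finrank_fintype_fun_eq_card]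

lemma Polynomial.eval_add_eq_sum_hasseDeriv {R : Type*} [CommRing R] {f : R[X]} {l : ℕ}
    (hf : f.natDegree < l) (x y : R) :
    f.eval (x + y) = ∑ m ∈ range l, x ^ m * (hasseDeriv m f).eval y := by
  rw [← taylor_eval, eval_eq_sum_range' (by rwa [natDegree_taylor])]
  simp [taylor_coeff, mul_comm]

lemma Polynomial.degree_hasseDeriv_lt {R : Type*} [Semiring R] {f : R[X]} {l : ℕ}
    (hf : f.natDegree < l) (m : ℕ) : (hasseDeriv m f).degree < l :=
  degree_le_natDegree.trans_lt <| by
    exact_mod_cast (natDegree_hasseDeriv_le f m).trans_lt ((Nat.sub_le _ _).trans_lt hf)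

lemma hankel_eq_expPolyMatrix_mul_transpose {ι : Type*} [Fintype ι] {n d : ℕ} (hd : d ≤ n)
    (lam : ι → ℂ) {l : ι → ℕ} {f : ι → ℂ[X]} (hf : ∀ j, (f j).natDegree < l j) {x : Fin n → ℂ}
    (hx : ∀ k : Fin n, x k = ∑ j, expPolySeq (f j) (lam j) k) :
    hankel n d x = expPolyMatrix (n - d + 1) lam (fun j (m : Fin (l j)) => X ^ (m : ℕ)) *
      (expPolyMatrix d lam fun j (m : Fin (l j)) => hasseDeriv m (f j))ᵀ := by
  ext i k
  have hik : i.val + k.val < n := by omega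
  rw [hankel, dif_pos hik, hx, mul_apply, Fintype.sum_sigma]
  refine sum_congr rfl fun j _ => ?_
  simp only [expPolyMatrix, expPolySeq, transpose_apply, Nat.cast_add,
    eval_add_eq_sum_hasseDeriv (hf j), ← Fin.sum_univ_eq_sum_range, Finset.sum_mul, pow_add]
  refine sum_congr rfl fun m _ => ?_
  simp only [eval_pow, eval_X]
  ring

lemma Polynomial.coeff_sum_fin_C_mul_X_pow {R : Type*} [Semiring R] {l : ℕ} (a : Fin l → R)
    (i : Fin l) : (∑ k : Fin l, C (a k) * X ^ (k : ℕ)).coeff i = a i := by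
  simp [finsetSum_coeff, coeff_C_mul, coeff_X_pow, Fin.val_inj]

lemma Polynomial.natDegree_sum_fin_C_mul_X_pow_le {R : Type*} [Semiring R] {l : ℕ}
    (a : Fin l → R) : (∑ k : Fin l, C (a k) * X ^ (k : ℕ)).natDegree ≤ l - 1 :=
  natDegree_sum_le_of_forall_le _ _ fun k _ => (natDegree_C_mul_X_pow_le _ _).trans (by omega)

theorem hankel_rank_eq_of_exponential_polynomial_general
    (p n d : ℕ) (lam : Fin p → ℂ)
    (hinj : Function.Injective lam) (h0 : ∀ j, lam j ≠ 0)
    (l : Fin p → ℕ) (hl : ∀ j, 0 < l j)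
    (a : (j : Fin p) → Fin (l j) → ℂ)
    (hlead : ∀ j, a j ⟨l j - 1, Nat.sub_lt (hl j) Nat.one_pos⟩ ≠ 0)
    (xh : Fin n → ℂ)
    (hx : ∀ k : Fin n, xh k =
      ∑ j, ∑ i : Fin (l j), a j i * (k.val : ℂ) ^ (i : ℕ) * lam j ^ (k.val : ℕ))
    (hd : d ≤ n) (h1 : (∑ j, l j) < n - d + 1) (h2 : (∑ j, l j) < d) :
    (hankel n d xh).rank = ∑ j, l j := by
  let f : Fin p → ℂ[X] := fun j => ∑ i : Fin (l j), C (a j i) * X ^ (i : ℕ)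
  have hf_lead : ∀ j, (f j).coeff (l j - 1) ≠ 0 := fun j =>
    coeff_sum_fin_C_mul_X_pow (a j) ⟨l j - 1, _⟩ ▸ hlead j
  have hf_natDegree : ∀ j, (f j).natDegree = l j - 1 := fun j =>
    natDegree_eq_of_le_of_coeff_ne_zero (natDegree_sum_fin_C_mul_X_pow_le _) (hf_lead j)
  have hf_lt : ∀ j, (f j).natDegree < l j := fun j => by have := hl j; rw [hf_natDegree]; omega
  have hxf : ∀ k : Fin n, xh k = ∑ j, expPolySeq (f j) (lam j) k := by
    simp [hx, f, expPolySeq, eval_finsetSum, Finset.sum_mul]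
  have hU := mulVec_expPolyMatrix_injective hinj h0 (N := n - d + 1)
    (v := fun j (m : Fin (l j)) => X ^ (m : ℕ))
    (fun _ => linearIndependent_of_injective_natDegree (fun _ => pow_ne_zero _ X_ne_zero)
      (by simpa using Fin.val_injective))
    (fun _ m => by rw [degree_X_pow]; exact_mod_cast m.isLt) h1.le
  have hW := mulVec_expPolyMatrix_injective hinj h0 (N := d)
    (v := fun j (m : Fin (l j)) => hasseDeriv m (f j))
    (fun j => linearIndependent_hasseDeriv (fun h => hf_lead j (by rw [h, coeff_zero]))
      (by rw [hf_natDegree]; omega))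
    (fun j m => degree_hasseDeriv_lt (hf_lt j) m) h2.le
  rw [hankel_eq_expPolyMatrix_mul_transpose hd lam hf_lt hxf,
    rank_mul_eq_right_of_mulVec_injective _ _ hU, rank_transpose,
    rank_eq_card_of_mulVec_injective _ hW, Fintype.card_sigma]
  simp only [Fintype.card_fin]

/-- If `x̂[k] = ∑_j ∑_{l<l_j} a_{j,l} k^l λ_j^k` with distinct nonzero
`λ_j` and nonzero leading coefficients, `r = ∑_j l_j`, and `min{n−d+1, d} > r`, then the
Hankel matrix `𝓗(x̂)` has rank exactly `r`. -/
theorem hankel_rank_eq_of_exponential_polynomial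
    (p n d : ℕ) (hp : 0 < p) (lam : Fin p → ℂ)
    (hinj : Function.Injective lam) (h0 : ∀ j, lam j ≠ 0)
    (l : Fin p → ℕ) (hl : ∀ j, 0 < l j)
    (a : (j : Fin p) → Fin (l j) → ℂ)
    (hlead : ∀ j, a j ⟨l j - 1, Nat.sub_lt (hl j) Nat.one_pos⟩ ≠ 0)
    (xh : Fin n → ℂ)
    (hx : ∀ k : Fin n, xh k =
      ∑ j, ∑ i : Fin (l j), a j i * (k.val : ℂ) ^ (i : ℕ) * lam j ^ (k.val : ℕ))
    (hd : d ≤ n) (h1 : (∑ j, l j) < n - d + 1) (h2 : (∑ j, l j) < d) :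
    (hankel n d xh).rank = ∑ j, l j :=
  hankel_rank_eq_of_exponential_polynomial_general p n d lam hinj h0 l hl a hlead xh hx hd h1 h2
end

section
/- Let A_1,…,A_n ∈ ℂ^{n1×n2} be orthonormal with respect to the Frobenius inner product ⟨A,B⟩ = Tr(AᴴB), and define the injective linear lifting 𝓛 : ℂⁿ → ℂ^{n1×n2} by 𝓛(x) = ∑_{k=1}^n x_k·A_k. Let 𝒜(M) = ∑_{k=1}^n A_k·⟨A_k, M⟩. Fix x ∈ ℂⁿ and suppose 𝓛(x) = U·Σ·Vᴴ where U ∈ ℂ^{n1×r} and V ∈ ℂ^{n2×r} have orthonormal columns and Σ ∈ ℂ^{r×r} is diagonal with strictly positive diagonal entries. Define 𝒫_T(M) = UUᴴM + MVVᴴ − UUᴴMVVᴴ and 𝒫_{T⊥}(M) = M − 𝒫_T(M). Let ω = (ω_1,…,ω_m) ∈ {1,…,n}^m, let 𝒜_Ω(M) = ∑_{j=1}^m A_{ω_j}·⟨A_{ω_j}, M⟩, and let 𝒜'_Ω(M) = ∑_{k ∈ S} A_k·⟨A_k, M⟩ where S = {ω_1,…,ω_m} is the set of distinct sampled indices. Suppose: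 (i) ‖(n/m)·𝒫_T 𝒜_Ω 𝒫_T − 𝒫_T 𝒜 𝒫_T‖ ≤ 1/2, where ‖·‖ is the operator norm induced by the Frobenius norm; and (ii) there exists W ∈ ℂ^{n1×n2} with (𝒜 − 𝒜'_Ω)(W) = 0, ‖𝒫_T(W − UVᴴ)‖_F ≤ 1/(7n), and ‖𝒫_{T⊥}(W)‖ ≤ 1/2 (spectral norm). Then x is the unique minimizer of ‖𝓛(g)‖_* over all g ∈ ℂⁿ with g_{ω_j} = x_{ω_j} for every j = 1,…,m; that is, every such feasible g ≠ x satisfies ‖𝓛(g)‖_* > ‖𝓛(x)‖_*. -/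
open Matrix
open scoped ComplexOrder

/-- Frobenius inner product `⟨A,B⟩ = Tr(AᴴB)`. -/
noncomputable def frobInner {m n : ℕ} (A B : Matrix (Fin m) (Fin n) ℂ) : ℂ :=
  (Aᴴ * B).trace

/-- Frobenius norm. -/
noncomputable def frobNorm {m n : ℕ} (A : Matrix (Fin m) (Fin n) ℂ) : ℝ :=
  Real.sqrt (∑ i, ∑ j, ‖A i j‖ ^ 2)

/-- Spectral norm (largest singular value), as the operator norm of the induced map
between Euclidean spaces. -/
noncomputable def specNorm {m n : ℕ} (A : Matrix (Fin m) (Fin n) ℂ) : ℝ :=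
  ‖LinearMap.toContinuousLinearMap (Matrix.toEuclideanLin A)‖

/-- Nuclear norm: trace of the positive semidefinite square root of `AᴴA`. -/
noncomputable def nuclearNorm {m n : ℕ} (A : Matrix (Fin m) (Fin n) ℂ) : ℝ :=
  (((Matrix.posSemidef_conjTranspose_mul_self A).1.eigenvectorUnitary.1 *
      diagonal (((↑) : ℝ → ℂ) ∘ (√·) ∘ (Matrix.posSemidef_conjTranspose_mul_self A).1.eigenvalues) *
      (star (Matrix.posSemidef_conjTranspose_mul_self A).1.eigenvectorUnitary :
        Matrix (Fin n) (Fin n) ℂ)).trace).re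

/-- Projection onto the tangent space `T`:
`𝒫_T(M) = UUᴴM + MVVᴴ − UUᴴMVVᴴ`. -/
noncomputable def PT {n1 n2 r : ℕ} (U : Matrix (Fin n1) (Fin r) ℂ)
    (V : Matrix (Fin n2) (Fin r) ℂ) (M : Matrix (Fin n1) (Fin n2) ℂ) :
    Matrix (Fin n1) (Fin n2) ℂ :=
  U * Uᴴ * M + M * (V * Vᴴ) - U * Uᴴ * M * (V * Vᴴ)

/-- Projection onto the orthogonal complement of the tangent space. -/
noncomputable def PTperp {n1 n2 r : ℕ} (U : Matrix (Fin n1) (Fin r) ℂ)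
    (V : Matrix (Fin n2) (Fin r) ℂ) (M : Matrix (Fin n1) (Fin n2) ℂ) :
    Matrix (Fin n1) (Fin n2) ℂ :=
  M - PT U V M

/-- `𝒜(M) = ∑_{k=1}^n A_k·⟨A_k, M⟩`. -/
noncomputable def Aproj {n1 n2 n : ℕ} (A : Fin n → Matrix (Fin n1) (Fin n2) ℂ)
    (M : Matrix (Fin n1) (Fin n2) ℂ) : Matrix (Fin n1) (Fin n2) ℂ :=
  ∑ k, frobInner (A k) M • A k

/-- `𝒜_Ω(M) = ∑_{j=1}^m A_{ω_j}·⟨A_{ω_j}, M⟩` (with multiplicity). -/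
noncomputable def AsampMulti {n1 n2 n m : ℕ} (A : Fin n → Matrix (Fin n1) (Fin n2) ℂ)
    (ω : Fin m → Fin n) (M : Matrix (Fin n1) (Fin n2) ℂ) : Matrix (Fin n1) (Fin n2) ℂ :=
  ∑ j, frobInner (A (ω j)) M • A (ω j)

/-- `𝒜'_Ω(M) = ∑_{k ∈ {ω_1,…,ω_m}} A_k·⟨A_k, M⟩` (distinct sampled indices). -/
noncomputable def AsampSet {n1 n2 n m : ℕ} (A : Fin n → Matrix (Fin n1) (Fin n2) ℂ)
    (ω : Fin m → Fin n) (M : Matrix (Fin n1) (Fin n2) ℂ) : Matrix (Fin n1) (Fin n2) ℂ :=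
  ∑ k ∈ Finset.image ω Finset.univ, frobInner (A k) M • A k

/-- Operator norm induced by the Frobenius norm of a map on matrices. -/
noncomputable def opNormFro {n1 n2 : ℕ}
    (f : Matrix (Fin n1) (Fin n2) ℂ → Matrix (Fin n1) (Fin n2) ℂ) : ℝ :=
  sSup {c : ℝ | ∃ M, frobNorm M ≤ 1 ∧ c = frobNorm (f M)}

/-!
Let `H = 𝓛(g - x) ≠ 0`. It vanishes on the samples, so `𝒜_Ω H = 0` and `𝒜 H = H`; the near
isometry of `(n/m) 𝒫_T 𝒜_Ω 𝒫_T` on `T` then bounds the tangent part,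
`‖𝒫_T H‖_F ≤ 2(n+1) ‖𝒫_{T⊥} H‖_F`, so `𝒫_{T⊥} H ≠ 0`. Testing `‖𝓛(x) + H‖_*` against the
subgradient `UVᴴ + sgn(𝒫_{T⊥} H)`, whose spectral norm is at most `1`, gives
`‖𝓛(x) + H‖_* ≥ ‖𝓛(x)‖_* + Re⟨UVᴴ, H⟩ + ‖𝒫_{T⊥} H‖_*`. The certificate `W` has no coefficients
outside the samples and `H` none on them, so `⟨W, H⟩ = 0` and
`Re⟨UVᴴ, H⟩ = -Re⟨W - UVᴴ, H⟩ ≥ -‖𝒫_T(W - UVᴴ)‖_F ‖𝒫_T H‖_F - ‖𝒫_{T⊥} W‖ ‖𝒫_{T⊥} H‖_*`,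
which is at least `-(3/7 + 1/2) ‖𝒫_{T⊥} H‖_*` once `n ≥ 2`. For `n ≤ 1` the sampled
coefficients already determine `g`.
-/

namespace DualCertificate

open WithLp
open scoped Matrix.Norms.L2Operator

section Frobenius

variable {a b : ℕ}

def toEuclidean : Matrix (Fin a) (Fin b) ℂ →ₗ[ℂ] EuclideanSpace ℂ (Fin a × Fin b) where
  toFun M := toLp 2 fun p => M p.1 p.2
  map_add' _ _ := rfl
  map_smul' _ _ := rfl

lemma toEuclidean_injective : Function.Injective (toEuclidean (a := a) (b := b)) :=
  fun _ _ h => Matrix.ext fun i j => congrFun (congrArg ofLp h) (i, j)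

lemma frobNorm_eq_norm (M : Matrix (Fin a) (Fin b) ℂ) : frobNorm M = ‖toEuclidean M‖ := by
  rw [frobNorm, EuclideanSpace.norm_eq, ← Finset.sum_product', Finset.univ_product_univ]
  rfl

lemma frobInner_eq_inner (M N : Matrix (Fin a) (Fin b) ℂ) :
    frobInner M N = inner ℂ (toEuclidean M) (toEuclidean N) := by
  rw [frobInner, EuclideanSpace.inner_toLp_toLp, dotProduct, ← Finset.univ_product_univ,
    Finset.sum_product, Matrix.trace, Finset.sum_comm]
  simp only [Matrix.diag_apply, Matrix.mul_apply, Matrix.conjTranspose_apply, mul_comm]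
  rfl

lemma frobNorm_nonneg (M : Matrix (Fin a) (Fin b) ℂ) : 0 ≤ frobNorm M :=
  Real.sqrt_nonneg _

lemma frobNorm_eq_zero {M : Matrix (Fin a) (Fin b) ℂ} : frobNorm M = 0 ↔ M = 0 := by
  rw [frobNorm_eq_norm, norm_eq_zero, ← map_zero toEuclidean, toEuclidean_injective.eq_iff]

lemma frobNorm_sub_le (M N : Matrix (Fin a) (Fin b) ℂ) :
    frobNorm (M - N) ≤ frobNorm M + frobNorm N := by
  simpa only [frobNorm_eq_norm, map_sub] using norm_sub_le _ _

lemma frobNorm_smul (c : ℂ) (M : Matrix (Fin a) (Fin b) ℂ) :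
    frobNorm (c • M) = ‖c‖ * frobNorm M := by
  rw [frobNorm_eq_norm, frobNorm_eq_norm, map_smul, norm_smul]

lemma frobNorm_real_smul (c : ℝ) (M : Matrix (Fin a) (Fin b) ℂ) :
    frobNorm (c • M) = |c| * frobNorm M := by
  rw [← Complex.coe_smul, frobNorm_smul, Complex.norm_real, Real.norm_eq_abs]

lemma frobNorm_sq (M : Matrix (Fin a) (Fin b) ℂ) : frobNorm M ^ 2 = (frobInner M M).re := by
  rw [frobNorm_eq_norm, frobInner_eq_inner, ← inner_self_eq_norm_sq (𝕜 := ℂ)]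
  rfl

lemma re_frobInner_le (M N : Matrix (Fin a) (Fin b) ℂ) :
    (frobInner M N).re ≤ frobNorm M * frobNorm N := by
  rw [frobInner_eq_inner, frobNorm_eq_norm, frobNorm_eq_norm]
  exact re_inner_le_norm (𝕜 := ℂ) _ _

lemma norm_frobInner_le (M N : Matrix (Fin a) (Fin b) ℂ) :
    ‖frobInner M N‖ ≤ frobNorm M * frobNorm N := by
  rw [frobInner_eq_inner, frobNorm_eq_norm, frobNorm_eq_norm]
  exact norm_inner_le_norm (𝕜 := ℂ) _ _

lemma frobInner_add_left (M N P : Matrix (Fin a) (Fin b) ℂ) :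
    frobInner (M + N) P = frobInner M P + frobInner N P := by
  simp [frobInner, Matrix.add_mul]

lemma frobInner_add_right (M N P : Matrix (Fin a) (Fin b) ℂ) :
    frobInner M (N + P) = frobInner M N + frobInner M P := by
  simp [frobInner, Matrix.mul_add]

lemma frobInner_sub_left (M N P : Matrix (Fin a) (Fin b) ℂ) :
    frobInner (M - N) P = frobInner M P - frobInner N P := by
  simp [frobInner, Matrix.sub_mul]

lemma frobInner_sub_right (M N P : Matrix (Fin a) (Fin b) ℂ) :
    frobInner M (N - P) = frobInner M N - frobInner M P := by
  simp [frobInner, Matrix.mul_sub]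

lemma frobInner_smul_right (c : ℂ) (M N : Matrix (Fin a) (Fin b) ℂ) :
    frobInner M (c • N) = c * frobInner M N := by
  simp [frobInner]

lemma frobInner_sum_right {ι : Type*} (s : Finset ι) (M : Matrix (Fin a) (Fin b) ℂ)
    (f : ι → Matrix (Fin a) (Fin b) ℂ) :
    frobInner M (∑ i ∈ s, f i) = ∑ i ∈ s, frobInner M (f i) := by
  simp [frobInner, Matrix.mul_sum, Matrix.trace_sum]

lemma frobInner_mul_left {k : ℕ} (P : Matrix (Fin a) (Fin k) ℂ) (M : Matrix (Fin k) (Fin b) ℂ)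
    (N : Matrix (Fin a) (Fin b) ℂ) : frobInner (P * M) N = frobInner M (Pᴴ * N) := by
  simp only [frobInner, Matrix.conjTranspose_mul, Matrix.mul_assoc]

lemma frobInner_mul_right {k : ℕ} (M : Matrix (Fin a) (Fin k) ℂ)
    (Q : Matrix (Fin k) (Fin b) ℂ) (N : Matrix (Fin a) (Fin b) ℂ) :
    frobInner (M * Q) N = frobInner M (N * Qᴴ) := by
  rw [frobInner, frobInner, Matrix.conjTranspose_mul, Matrix.mul_assoc, Matrix.trace_mul_comm,
    Matrix.mul_assoc]

lemma frobInner_comm (M N : Matrix (Fin a) (Fin b) ℂ) :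
    frobInner M N = starRingEnd ℂ (frobInner N M) := by
  rw [frobInner_eq_inner, frobInner_eq_inner, inner_conj_symm]

lemma frobNorm_le_of_selfAdjoint_of_idempotent
    {f : Matrix (Fin a) (Fin b) ℂ → Matrix (Fin a) (Fin b) ℂ}
    (hadj : ∀ M N, frobInner (f M) N = frobInner M (f N)) (hidem : ∀ M, f (f M) = f M)
    (M : Matrix (Fin a) (Fin b) ℂ) : frobNorm (f M) ≤ frobNorm M := by
  have h : frobNorm (f M) ^ 2 ≤ frobNorm M * frobNorm (f M) := by
    rw [frobNorm_sq, hadj, hidem]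
    exact re_frobInner_le _ _
  nlinarith [frobNorm_nonneg (f M), frobNorm_nonneg M]

end Frobenius

section Tangent

variable {n1 n2 r : ℕ} (U : Matrix (Fin n1) (Fin r) ℂ) (V : Matrix (Fin n2) (Fin r) ℂ)

lemma PT_sub (M N : Matrix (Fin n1) (Fin n2) ℂ) : PT U V (M - N) = PT U V M - PT U V N := by
  simp only [PT, Matrix.mul_sub, Matrix.sub_mul]
  abel

lemma PT_neg (M : Matrix (Fin n1) (Fin n2) ℂ) : PT U V (-M) = -PT U V M := by
  simp only [PT, Matrix.mul_neg, Matrix.neg_mul]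
  abel

lemma PT_smul (c : ℂ) (M : Matrix (Fin n1) (Fin n2) ℂ) : PT U V (c • M) = c • PT U V M := by
  simp only [PT, Matrix.mul_smul, Matrix.smul_mul, smul_add, smul_sub]

lemma frobInner_PT_left (M N : Matrix (Fin n1) (Fin n2) ℂ) :
    frobInner (PT U V M) N = frobInner M (PT U V N) := by
  have hP : (U * Uᴴ)ᴴ = U * Uᴴ := by simp [Matrix.conjTranspose_mul]
  have hQ : (V * Vᴴ)ᴴ = V * Vᴴ := by simp [Matrix.conjTranspose_mul]
  unfold PT
  generalize U * Uᴴ = P at hP ⊢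
  generalize V * Vᴴ = Q at hQ ⊢
  rw [frobInner_sub_left, frobInner_add_left, frobInner_mul_left P M, frobInner_mul_right M Q,
    frobInner_mul_right (P * M) Q, frobInner_mul_left P M, hP, hQ, frobInner_sub_right,
    frobInner_add_right, Matrix.mul_assoc]

lemma frobInner_PTperp_left (M N : Matrix (Fin n1) (Fin n2) ℂ) :
    frobInner (PTperp U V M) N = frobInner M (PTperp U V N) := by
  rw [PTperp, PTperp, frobInner_sub_left, frobInner_sub_right, frobInner_PT_left]

lemma PT_eq_zero_of_mul_eq_zero {B : Matrix (Fin n1) (Fin n2) ℂ} (hUB : Uᴴ * B = 0)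
    (hBV : B * V = 0) : PT U V B = 0 := by
  simp only [PT, Matrix.mul_assoc, hUB, ← Matrix.mul_assoc B, hBV, Matrix.mul_zero,
    Matrix.zero_mul]
  abel

variable {U V} (hU : Uᴴ * U = 1) (hV : Vᴴ * V = 1)
include hU hV

lemma PT_PT (M : Matrix (Fin n1) (Fin n2) ℂ) : PT U V (PT U V M) = PT U V M := by
  have hU' {k : ℕ} (X : Matrix (Fin r) (Fin k) ℂ) : Uᴴ * (U * X) = X := by
    rw [← Matrix.mul_assoc, hU, Matrix.one_mul]
  have hV' {k : ℕ} (X : Matrix (Fin r) (Fin k) ℂ) : Vᴴ * (V * X) = X := by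
    rw [← Matrix.mul_assoc, hV, Matrix.one_mul]
  simp only [PT, Matrix.mul_add, Matrix.add_mul, Matrix.mul_sub, Matrix.sub_mul,
    Matrix.mul_assoc, hU', hV']
  abel

lemma PTperp_PTperp (M : Matrix (Fin n1) (Fin n2) ℂ) :
    PTperp U V (PTperp U V M) = PTperp U V M := by
  simp only [PTperp, PT_sub, PT_PT hU hV, sub_self, sub_zero]

lemma frobNorm_PT_le (M : Matrix (Fin n1) (Fin n2) ℂ) : frobNorm (PT U V M) ≤ frobNorm M :=
  frobNorm_le_of_selfAdjoint_of_idempotent (frobInner_PT_left U V) (PT_PT hU hV) M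

lemma frobInner_eq_PT_add_PTperp (C M : Matrix (Fin n1) (Fin n2) ℂ) :
    frobInner C M =
      frobInner (PT U V C) (PT U V M) + frobInner (PTperp U V C) (PTperp U V M) := by
  rw [frobInner_PT_left, PT_PT hU hV, frobInner_PTperp_left, PTperp_PTperp hU hV,
    ← frobInner_add_right, PTperp, add_sub_cancel]

omit hV in
lemma conjTranspose_mul_PTperp (M : Matrix (Fin n1) (Fin n2) ℂ) : Uᴴ * PTperp U V M = 0 := by
  simp only [PTperp, PT, Matrix.mul_sub, Matrix.mul_add, ← Matrix.mul_assoc, hU,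
    Matrix.one_mul]
  abel

omit hU in
lemma PTperp_mul (M : Matrix (Fin n1) (Fin n2) ℂ) : PTperp U V M * V = 0 := by
  simp only [PTperp, PT, Matrix.sub_mul, Matrix.add_mul, Matrix.mul_assoc, hV, Matrix.mul_one]
  abel

lemma PTperp_sub_mul_conjTranspose (W : Matrix (Fin n1) (Fin n2) ℂ) :
    PTperp U V (W - U * Vᴴ) = PTperp U V W := by
  have hUV : PT U V (U * Vᴴ) = U * Vᴴ := by
    simp only [PT, ← Matrix.mul_assoc, Matrix.mul_assoc U Uᴴ U, hU, Matrix.mul_one]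
    simp only [Matrix.mul_assoc, hV, Matrix.one_mul]
    abel
  rw [PTperp, PTperp, PT_sub, hUV]
  abel

end Tangent

section Sampling

variable {n1 n2 n m : ℕ} (A : Fin n → Matrix (Fin n1) (Fin n2) ℂ) (ω : Fin m → Fin n)

lemma Aproj_sub (M N : Matrix (Fin n1) (Fin n2) ℂ) :
    Aproj A (M - N) = Aproj A M - Aproj A N := by
  simp only [Aproj, frobInner_sub_right, sub_smul, Finset.sum_sub_distrib]

lemma AsampMulti_sub (M N : Matrix (Fin n1) (Fin n2) ℂ) :
    AsampMulti A ω (M - N) = AsampMulti A ω M - AsampMulti A ω N := by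
  simp only [AsampMulti, frobInner_sub_right, sub_smul, Finset.sum_sub_distrib]

lemma Aproj_smul (c : ℂ) (M : Matrix (Fin n1) (Fin n2) ℂ) :
    Aproj A (c • M) = c • Aproj A M := by
  simp only [Aproj, frobInner_smul_right, Finset.smul_sum, smul_smul]

lemma AsampMulti_smul (c : ℂ) (M : Matrix (Fin n1) (Fin n2) ℂ) :
    AsampMulti A ω (c • M) = c • AsampMulti A ω M := by
  simp only [AsampMulti, frobInner_smul_right, Finset.smul_sum, smul_smul]

lemma frobInner_Aproj_left (M N : Matrix (Fin n1) (Fin n2) ℂ) :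
    frobInner (Aproj A M) N = frobInner M (Aproj A N) := by
  simp only [Aproj, frobInner_eq_inner, map_sum, map_smul, sum_inner, inner_sum, inner_smul_left,
    inner_smul_right, inner_conj_symm]
  exact Finset.sum_congr rfl fun _ _ => mul_comm _ _

variable {A} (horth : ∀ k l, frobInner (A k) (A l) = if k = l then 1 else 0)
include horth

lemma frobInner_sum_smul (v : Fin n → ℂ) (k : Fin n) :
    frobInner (A k) (∑ l, v l • A l) = v k := by
  simp [frobInner_sum_right, frobInner_smul_right, horth]

lemma Aproj_sum_smul (v : Fin n → ℂ) : Aproj A (∑ l, v l • A l) = ∑ l, v l • A l := by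
  simp only [Aproj, frobInner_sum_smul horth]

lemma AsampMulti_sum_smul_eq_zero {v : Fin n → ℂ} (hv : ∀ j, v (ω j) = 0) :
    AsampMulti A ω (∑ l, v l • A l) = 0 := by
  simp [AsampMulti, frobInner_sum_smul horth, hv]

lemma sum_smul_ne_zero {v : Fin n → ℂ} (hv : v ≠ 0) : ∑ k, v k • A k ≠ 0 := by
  obtain ⟨k, hk⟩ := Function.ne_iff.mp hv
  intro h
  have h' := frobInner_sum_smul horth v k
  rw [h] at h'
  exact hk (h'.symm.trans (by simp [frobInner]))

lemma frobNorm_Aproj_le (M : Matrix (Fin n1) (Fin n2) ℂ) : frobNorm (Aproj A M) ≤ frobNorm M :=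
  frobNorm_le_of_selfAdjoint_of_idempotent (frobInner_Aproj_left A)
    (fun _ => Aproj_sum_smul horth _) M

lemma frobNorm_AsampMulti_le (M : Matrix (Fin n1) (Fin n2) ℂ) :
    frobNorm (AsampMulti A ω M) ≤ m * frobNorm M := by
  have hA (k : Fin n) : frobNorm (A k) = 1 := by
    have h := frobNorm_sq (A k)
    rwa [horth, if_pos rfl, Complex.one_re, pow_eq_one_iff_of_nonneg (frobNorm_nonneg _)
      two_ne_zero] at h
  rw [AsampMulti, frobNorm_eq_norm, map_sum]
  refine (norm_sum_le _ _).trans ?_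
  calc ∑ j, ‖toEuclidean (frobInner (A (ω j)) M • A (ω j))‖
      ≤ ∑ _j : Fin m, frobNorm M := Finset.sum_le_sum fun j _ => by
        simpa [norm_smul, ← frobNorm_eq_norm, hA] using norm_frobInner_le (A (ω j)) M
    _ = m * frobNorm M := by simp

lemma frobInner_sum_smul_eq_zero_of_certificate {W : Matrix (Fin n1) (Fin n2) ℂ}
    (hW : Aproj A W - AsampSet A ω W = 0) {v : Fin n → ℂ} (hv : ∀ j, v (ω j) = 0) :
    frobInner W (∑ k, v k • A k) = 0 := by
  have hWk {k : Fin n} (hk : k ∉ Finset.image ω Finset.univ) : frobInner (A k) W = 0 := by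
    have h := congrArg (frobInner (A k)) hW
    rw [frobInner_sub_right, Aproj, frobInner_sum_smul horth, AsampSet, frobInner_sum_right,
      Finset.sum_eq_zero fun l hl => by
        rw [frobInner_smul_right, horth, if_neg (ne_of_mem_of_not_mem hl hk).symm, mul_zero],
      sub_zero] at h
    simpa [frobInner] using h
  rw [frobInner_sum_right]
  refine Finset.sum_eq_zero fun k _ => ?_
  by_cases hk : k ∈ Finset.image ω Finset.univ
  · obtain ⟨j, -, rfl⟩ := Finset.mem_image.mp hk
    rw [frobInner_smul_right, hv, zero_mul]
  · rw [frobInner_smul_right, frobInner_comm, hWk hk, map_zero, mul_zero]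

end Sampling

lemma frobNorm_le_of_opNormFro_le {a b : ℕ}
    {F : Matrix (Fin a) (Fin b) ℂ → Matrix (Fin a) (Fin b) ℂ}
    (hF : ∀ (c : ℂ) M, F (c • M) = c • F M) {C : ℝ}
    (hC : ∀ M, frobNorm (F M) ≤ C * frobNorm M)
    {c : ℝ} (h : opNormFro F ≤ c) (M : Matrix (Fin a) (Fin b) ℂ) :
    frobNorm (F M) ≤ c * frobNorm M := by
  rcases eq_or_ne M 0 with rfl | hM
  · rw [show F 0 = 0 by simpa using hF 0 0]
    simp [frobNorm]
  have ht : 0 < frobNorm M := (frobNorm_nonneg M).lt_of_ne' (frobNorm_eq_zero.not.mpr hM)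
  set t := frobNorm M
  -- `sSup` of an unbounded set is `0`, so `opNormFro F ≤ c` says nothing without `hC`.
  have hbdd : BddAbove {c : ℝ | ∃ M, frobNorm M ≤ 1 ∧ c = frobNorm (F M)} := by
    refine ⟨|C|, ?_⟩
    rintro _ ⟨N, hN, rfl⟩
    exact (hC N).trans <| (mul_le_mul_of_nonneg_right (le_abs_self C) (frobNorm_nonneg N)).trans
      (mul_le_of_le_one_right (abs_nonneg C) hN)
  have hunit : frobNorm ((t⁻¹ : ℂ) • M) = 1 := by
    rw [frobNorm_smul, norm_inv, Complex.norm_real, Real.norm_of_nonneg ht.le,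
      inv_mul_cancel₀ ht.ne']
  have hle : t⁻¹ * frobNorm (F M) ≤ c := by
    have := (le_csSup hbdd ⟨_, hunit.le, rfl⟩).trans h
    rwa [hF, frobNorm_smul, norm_inv, Complex.norm_real, Real.norm_of_nonneg ht.le] at this
  rwa [inv_mul_le_iff₀ ht, mul_comm] at hle

section Isometry

variable {n1 n2 n m r : ℕ} (A : Fin n → Matrix (Fin n1) (Fin n2) ℂ) (ω : Fin m → Fin n)
  (U : Matrix (Fin n1) (Fin r) ℂ) (V : Matrix (Fin n2) (Fin r) ℂ)

noncomputable def isometryDefect (M : Matrix (Fin n1) (Fin n2) ℂ) :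
    Matrix (Fin n1) (Fin n2) ℂ :=
  ((n : ℝ) / (m : ℝ)) • PT U V (AsampMulti A ω (PT U V M)) - PT U V (Aproj A (PT U V M))

lemma isometryDefect_smul (c : ℂ) (M : Matrix (Fin n1) (Fin n2) ℂ) :
    isometryDefect A ω U V (c • M) = c • isometryDefect A ω U V M := by
  simp only [isometryDefect, PT_smul, AsampMulti_smul, Aproj_smul, smul_sub, smul_comm c]

variable {A U V} (horth : ∀ k l, frobInner (A k) (A l) = if k = l then 1 else 0)
  (hU : Uᴴ * U = 1) (hV : Vᴴ * V = 1)
include horth hU hV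

lemma frobNorm_smul_PT_AsampMulti_le (M : Matrix (Fin n1) (Fin n2) ℂ) :
    frobNorm (((n : ℝ) / (m : ℝ)) • PT U V (AsampMulti A ω M)) ≤ n * frobNorm M := by
  rw [frobNorm_real_smul, abs_of_nonneg (by positivity)]
  calc (n : ℝ) / m * frobNorm (PT U V (AsampMulti A ω M))
      ≤ n / m * (m * frobNorm M) := by
        gcongr
        exact (frobNorm_PT_le hU hV _).trans (frobNorm_AsampMulti_le ω horth M)
    _ ≤ n * frobNorm M := by
        rw [← mul_assoc]
        refine mul_le_mul_of_nonneg_right ?_ (frobNorm_nonneg M)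
        rcases eq_or_ne (m : ℝ) 0 with h | h
        · rw [h]; simp
        · rw [div_mul_cancel₀ _ h]

lemma frobNorm_isometryDefect_le (M : Matrix (Fin n1) (Fin n2) ℂ) :
    frobNorm (isometryDefect A ω U V M) ≤ (n + 1) * frobNorm M := by
  have h₁ := frobNorm_smul_PT_AsampMulti_le ω horth hU hV (PT U V M)
  have h₂ := (frobNorm_PT_le hU hV _).trans (frobNorm_Aproj_le horth (PT U V M))
  have h₃ := frobNorm_PT_le hU hV M
  have h₄ := frobNorm_sub_le (((n : ℝ) / (m : ℝ)) • PT U V (AsampMulti A ω (PT U V M)))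
    (PT U V (Aproj A (PT U V M)))
  rw [isometryDefect]
  nlinarith [frobNorm_nonneg M, (Nat.cast_nonneg n : (0 : ℝ) ≤ n)]

lemma frobNorm_PT_le_mul_frobNorm_PTperp
    (hiso : opNormFro (isometryDefect A ω U V) ≤ 1 / 2) {H : Matrix (Fin n1) (Fin n2) ℂ}
    (hΩ : AsampMulti A ω H = 0) (hA : Aproj A H = H) :
    frobNorm (PT U V H) ≤ 2 * (n + 1) * frobNorm (PTperp U V H) := by
  have hdefect := frobNorm_le_of_opNormFro_le (isometryDefect_smul A ω U V)
    (frobNorm_isometryDefect_le ω horth hU hV) hiso (PT U V H)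
  have hsplit : PT U V H = H - PTperp U V H := (sub_sub_cancel H _).symm
  have hΩT : AsampMulti A ω (PT U V H) = -AsampMulti A ω (PTperp U V H) := by
    rw [hsplit, AsampMulti_sub, hΩ, zero_sub]
  have hAT : Aproj A (PT U V H) = H - Aproj A (PTperp U V H) := by
    rw [hsplit, Aproj_sub, hA]
  have hT : PT U V H = PT U V (Aproj A (PTperp U V H))
      - ((n : ℝ) / (m : ℝ)) • PT U V (AsampMulti A ω (PTperp U V H))
      - isometryDefect A ω U V (PT U V H) := by
    rw [isometryDefect, PT_PT hU hV, hΩT, hAT, PT_sub, PT_neg, smul_neg]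
    abel
  have h₁ := (frobNorm_PT_le hU hV _).trans (frobNorm_Aproj_le horth (PTperp U V H))
  have h₂ := frobNorm_smul_PT_AsampMulti_le ω horth hU hV (PTperp U V H)
  have h₃ := frobNorm_sub_le (PT U V (Aproj A (PTperp U V H)))
    (((n : ℝ) / (m : ℝ)) • PT U V (AsampMulti A ω (PTperp U V H)))
  have h₄ := frobNorm_sub_le (PT U V (Aproj A (PTperp U V H))
    - ((n : ℝ) / (m : ℝ)) • PT U V (AsampMulti A ω (PTperp U V H)))
    (isometryDefect A ω U V (PT U V H))
  rw [← hT] at h₄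
  linarith

end Isometry

section SpectralNorm

variable {k l : ℕ}

lemma specNorm_eq_l2_opNorm (C : Matrix (Fin l) (Fin k) ℂ) : specNorm C = ‖C‖ := rfl

lemma norm_toLp_sq (v : Fin k → ℂ) : ‖toLp 2 v‖ ^ 2 = (star v ⬝ᵥ v).re := by
  rw [← inner_self_eq_norm_sq (𝕜 := ℂ), EuclideanSpace.inner_toLp_toLp, dotProduct_comm]
  rfl

lemma norm_toLp_mulVec_sq (C : Matrix (Fin l) (Fin k) ℂ) (v : Fin k → ℂ) :
    ‖toLp 2 (C *ᵥ v)‖ ^ 2 = (star v ⬝ᵥ (Cᴴ * C) *ᵥ v).re := by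
  rw [norm_toLp_sq, Matrix.star_mulVec, ← Matrix.dotProduct_mulVec, Matrix.mulVec_mulVec]

lemma norm_toLp_mulVec_le (C : Matrix (Fin l) (Fin k) ℂ) (v : Fin k → ℂ) :
    ‖toLp 2 (C *ᵥ v)‖ ≤ specNorm C * ‖toLp 2 v‖ :=
  Matrix.l2_opNorm_mulVec C (toLp 2 v)

lemma specNorm_le_of_forall {C : Matrix (Fin l) (Fin k) ℂ} {c : ℝ} (hc : 0 ≤ c)
    (h : ∀ v, ‖toLp 2 (C *ᵥ v)‖ ≤ c * ‖toLp 2 v‖) : specNorm C ≤ c :=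
  ContinuousLinearMap.opNorm_le_bound _ hc fun v => h (ofLp v)

lemma l2_opNorm_diagonal_le_one {v : Fin k → ℂ} (hv : ∀ i, ‖v i‖ ≤ 1) :
    ‖Matrix.diagonal v‖ ≤ 1 := by
  rw [Matrix.l2_opNorm_diagonal]
  exact (pi_norm_le_iff_of_nonneg zero_le_one).mpr hv

lemma l2_opNorm_le_one_of_conjTranspose_mul_self {P : Matrix (Fin l) (Fin k) ℂ}
    (hP : Pᴴ * P = 1) : ‖P‖ ≤ 1 := by
  have h := Matrix.l2_opNorm_conjTranspose_mul_self P
  have h1 : ‖(1 : Matrix (Fin k) (Fin k) ℂ)‖ ≤ 1 :=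
    Matrix.diagonal_one (n := Fin k) (α := ℂ) ▸ l2_opNorm_diagonal_le_one fun _ => by simp
  rw [← hP, h] at h1
  nlinarith [norm_nonneg P]

end SpectralNorm

section NuclearNorm

variable {n1 n2 : ℕ}

lemma exists_spectral_conjTranspose_mul_self (B : Matrix (Fin n1) (Fin n2) ℂ) :
    ∃ (P : Matrix (Fin n2) (Fin n2) ℂ) (d : Fin n2 → ℝ), Pᴴ * P = 1 ∧ P * Pᴴ = 1 ∧
      (∀ i, 0 ≤ d i) ∧ Bᴴ * B = P * Matrix.diagonal (fun i => (d i : ℂ)) * Pᴴ ∧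
      nuclearNorm B = ∑ i, √(d i) := by
  have hG := Matrix.posSemidef_conjTranspose_mul_self B
  set P : Matrix (Fin n2) (Fin n2) ℂ := hG.1.eigenvectorUnitary.1
  have hPP : Pᴴ * P = 1 := Matrix.mem_unitaryGroup_iff'.mp hG.1.eigenvectorUnitary.2
  refine ⟨P, hG.1.eigenvalues, hPP, Matrix.mem_unitaryGroup_iff.mp hG.1.eigenvectorUnitary.2,
    hG.eigenvalues_nonneg, ?_, ?_⟩
  · have h := hG.1.spectral_theorem
    rw [Unitary.conjStarAlgAut_apply] at h
    exact h
  · change (P * _ * Pᴴ).trace.re = _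
    rw [Matrix.trace_mul_comm, ← Matrix.mul_assoc, hPP, Matrix.one_mul, Matrix.trace_diagonal]
    simp

lemma nuclearNorm_nonneg (B : Matrix (Fin n1) (Fin n2) ℂ) : 0 ≤ nuclearNorm B := by
  obtain ⟨P, d, -, -, -, -, hnuc⟩ := exists_spectral_conjTranspose_mul_self B
  exact hnuc ▸ Finset.sum_nonneg fun i _ => Real.sqrt_nonneg _

lemma frobNorm_le_nuclearNorm (B : Matrix (Fin n1) (Fin n2) ℂ) :
    frobNorm B ≤ nuclearNorm B := by
  obtain ⟨P, d, hPP, -, hd, hB, hnuc⟩ := exists_spectral_conjTranspose_mul_self B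
  have hfrob : frobNorm B ^ 2 = ∑ i, √(d i) ^ 2 := by
    rw [frobNorm_sq, frobInner, hB, Matrix.trace_mul_comm, ← Matrix.mul_assoc, hPP,
      Matrix.one_mul, Matrix.trace_diagonal]
    simp [Real.sq_sqrt (hd _)]
  have hsq := Finset.sum_sq_le_sq_sum_of_nonneg (s := Finset.univ) fun i _ => Real.sqrt_nonneg (d i)
  rw [hnuc]
  nlinarith [frobNorm_nonneg B, nuclearNorm_nonneg B, hnuc]

lemma frobInner_eq_sum_dotProduct {k : ℕ} (M N : Matrix (Fin k) (Fin n2) ℂ) :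
    frobInner M N = ∑ i, star (Mᵀ i) ⬝ᵥ Nᵀ i := by
  simp [frobInner, Matrix.trace, Matrix.mul_apply, dotProduct]

lemma norm_toLp_transpose_sq {k : ℕ} (M : Matrix (Fin k) (Fin n2) ℂ) (i : Fin n2) :
    ‖toLp 2 (Mᵀ i)‖ ^ 2 = ((Mᴴ * M) i i).re := by
  rw [norm_toLp_sq]
  simp [Matrix.mul_apply, dotProduct]

lemma re_dotProduct_le {k : ℕ} (u v : Fin k → ℂ) :
    (star u ⬝ᵥ v).re ≤ ‖toLp 2 u‖ * ‖toLp 2 v‖ := by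
  have h := re_inner_le_norm (𝕜 := ℂ) (toLp 2 u) (toLp 2 v)
  rwa [EuclideanSpace.inner_toLp_toLp, dotProduct_comm] at h

lemma re_frobInner_le_specNorm_mul_nuclearNorm (Z B : Matrix (Fin n1) (Fin n2) ℂ) :
    (frobInner Z B).re ≤ specNorm Z * nuclearNorm B := by
  obtain ⟨P, d, hPP, hPP', hd, hB, hnuc⟩ := exists_spectral_conjTranspose_mul_self B
  have hcol (i : Fin n2) : ‖toLp 2 (Pᵀ i)‖ = 1 := by
    have h := norm_toLp_transpose_sq P i
    rwa [hPP, Matrix.one_apply_eq, Complex.one_re,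
      pow_eq_one_iff_of_nonneg (norm_nonneg _) two_ne_zero] at h
  have hBcol (i : Fin n2) : ‖toLp 2 ((B * P)ᵀ i)‖ = √(d i) := by
    have hD : (B * P)ᴴ * (B * P) = Matrix.diagonal (fun i => (d i : ℂ)) := by
      rw [Matrix.conjTranspose_mul, Matrix.mul_assoc, ← Matrix.mul_assoc Bᴴ, hB]
      simp only [← Matrix.mul_assoc, hPP, Matrix.one_mul]
      rw [Matrix.mul_assoc, hPP, Matrix.mul_one]
    have h := norm_toLp_transpose_sq (B * P) i
    rw [hD, Matrix.diagonal_apply_eq, Complex.ofReal_re] at h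
    rw [← h, Real.sqrt_sq (norm_nonneg _)]
  have hZP : frobInner Z B = frobInner (Z * P) (B * P) := by
    rw [frobInner_mul_right, Matrix.mul_assoc, hPP', Matrix.mul_one]
  rw [hZP, frobInner_eq_sum_dotProduct, Complex.re_sum, hnuc, Finset.mul_sum]
  refine Finset.sum_le_sum fun i _ => (re_dotProduct_le _ _).trans ?_
  rw [hBcol]
  refine mul_le_mul_of_nonneg_right ?_ (Real.sqrt_nonneg _)
  exact (norm_toLp_mulVec_le Z (Pᵀ i)).trans_eq (by rw [hcol, mul_one])

end NuclearNorm

section Conjugation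

variable {k l : ℕ} {P : Matrix (Fin l) (Fin k) ℂ}

lemma conjTranspose_conj_diagonal_ofReal (P : Matrix (Fin l) (Fin k) ℂ) (v : Fin k → ℝ) :
    (P * Matrix.diagonal (fun i => (v i : ℂ)) * Pᴴ)ᴴ =
      P * Matrix.diagonal (fun i => (v i : ℂ)) * Pᴴ := by
  have hstar : star (fun i => (v i : ℂ)) = fun i => (v i : ℂ) := funext fun i => by simp
  simp [Matrix.conjTranspose_mul, Matrix.diagonal_conjTranspose, Matrix.mul_assoc, hstar]

variable (hP : Pᴴ * P = 1)
include hP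

lemma conj_diagonal_mul_conj_diagonal (u v : Fin k → ℂ) :
    P * Matrix.diagonal u * Pᴴ * (P * Matrix.diagonal v * Pᴴ) =
      P * Matrix.diagonal (u * v) * Pᴴ := by
  rw [Matrix.mul_assoc (P * _), ← Matrix.mul_assoc Pᴴ, ← Matrix.mul_assoc Pᴴ, hP,
    Matrix.one_mul, ← Matrix.mul_assoc, Matrix.mul_assoc P, Matrix.diagonal_mul_diagonal]
  rfl

lemma trace_conj_diagonal (u : Fin k → ℂ) :
    (P * Matrix.diagonal u * Pᴴ).trace = ∑ i, u i := by
  rw [Matrix.trace_mul_comm, ← Matrix.mul_assoc, hP, Matrix.one_mul, Matrix.trace_diagonal]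

end Conjugation

section SignMatrix

variable {n1 n2 : ℕ}

lemma inv_sqrt_mul_self {x : ℝ} (hx : 0 ≤ x) : (√x)⁻¹ * x = √x := by
  rcases eq_or_ne (√x) 0 with h | h
  · simp [h]
  · nth_rewrite 2 [← Real.mul_self_sqrt hx]
    rw [inv_mul_cancel_left₀ h]

/- With `BᴴB = P diag(d) Pᴴ`, the matrix `P diag((√d)⁻¹) Pᴴ` is the pseudo-inverse of
`|B| = (BᴴB)^{1/2}` (Lean's `0⁻¹ = 0` takes care of the kernel), and `B` times it is the
partial isometry `sgn B` of the polar decomposition `B = sgn(B) |B|`. -/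
variable {B : Matrix (Fin n1) (Fin n2) ℂ} {P : Matrix (Fin n2) (Fin n2) ℂ} {d : Fin n2 → ℝ}
  (hPP : Pᴴ * P = 1) (hd : ∀ i, 0 ≤ d i)
  (hB : Bᴴ * B = P * Matrix.diagonal (fun i => (d i : ℂ)) * Pᴴ)

include hPP hd hB

lemma re_frobInner_mul_pinv :
    (frobInner (B * (P * Matrix.diagonal (fun i => (((√(d i))⁻¹ : ℝ) : ℂ)) * Pᴴ)) B).re =
      ∑ i, √(d i) := by
  rw [frobInner, Matrix.conjTranspose_mul, conjTranspose_conj_diagonal_ofReal, Matrix.mul_assoc,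
    hB, conj_diagonal_mul_conj_diagonal hPP, trace_conj_diagonal hPP, Complex.re_sum]
  refine Finset.sum_congr rfl fun i _ => ?_
  simp [inv_sqrt_mul_self (hd i)]

lemma specNorm_mul_pinv_le_one :
    specNorm (B * (P * Matrix.diagonal (fun i => (((√(d i))⁻¹ : ℝ) : ℂ)) * Pᴴ)) ≤ 1 := by
  set Y := B * (P * Matrix.diagonal (fun i => (((√(d i))⁻¹ : ℝ) : ℂ)) * Pᴴ)
  have hYY : Yᴴ * Y =
      P * Matrix.diagonal (fun i => ((√(d i) * (√(d i))⁻¹ : ℝ) : ℂ)) * Pᴴ := by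
    rw [Matrix.conjTranspose_mul, conjTranspose_conj_diagonal_ofReal, Matrix.mul_assoc,
      ← Matrix.mul_assoc Bᴴ, hB, conj_diagonal_mul_conj_diagonal hPP,
      conj_diagonal_mul_conj_diagonal hPP]
    congr 3
    ext i
    rw [Pi.mul_apply, Pi.mul_apply, ← mul_assoc]
    exact_mod_cast congrArg (· * (√(d i))⁻¹) (inv_sqrt_mul_self (hd i))
  have hdiag := l2_opNorm_diagonal_le_one (v := fun i => ((√(d i) * (√(d i))⁻¹ : ℝ) : ℂ))
    fun i => by
      rw [Complex.norm_real, Real.norm_of_nonneg (by positivity)]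
      exact mul_inv_le_one
  have hP := l2_opNorm_le_one_of_conjTranspose_mul_self hPP
  have hsq : ‖Y‖ * ‖Y‖ ≤ 1 := by
    rw [← Matrix.l2_opNorm_conjTranspose_mul_self, hYY]
    refine (Matrix.l2_opNorm_mul _ _).trans ?_
    rw [Matrix.l2_opNorm_conjTranspose]
    refine mul_le_one₀ ((Matrix.l2_opNorm_mul _ _).trans ?_) (norm_nonneg _) hP
    exact mul_le_one₀ hP (norm_nonneg _) hdiag
  rw [specNorm_eq_l2_opNorm]
  nlinarith [norm_nonneg Y]

omit hd in
lemma mul_pinv_mul_eq_zero {k : ℕ} {V' : Matrix (Fin n2) (Fin k) ℂ} (hBV : B * V' = 0) :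
    B * (P * Matrix.diagonal (fun i => (((√(d i))⁻¹ : ℝ) : ℂ)) * Pᴴ) * V' = 0 := by
  have hd0 : Matrix.diagonal (fun i => (d i : ℂ)) * (Pᴴ * V') = 0 := by
    have h : Pᴴ * (Bᴴ * B) * V' = 0 := by rw [Matrix.mul_assoc, Matrix.mul_assoc, hBV]; simp
    rwa [hB, ← Matrix.mul_assoc, ← Matrix.mul_assoc, hPP, Matrix.one_mul, Matrix.mul_assoc] at h
  have hg0 : Matrix.diagonal (fun i => (((√(d i))⁻¹ : ℝ) : ℂ)) * (Pᴴ * V') = 0 := by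
    ext i j
    have h := congrFun (congrFun hd0 i) j
    simp only [Matrix.diagonal_mul, Matrix.zero_apply, mul_eq_zero, Complex.ofReal_eq_zero] at h ⊢
    rcases h with h | h
    · simp [h]
    · exact Or.inr h
  simp only [Matrix.mul_assoc, hg0, Matrix.mul_zero]

end SignMatrix

section Subgradient

variable {n1 n2 r : ℕ}

lemma exists_sign_matrix (B : Matrix (Fin n1) (Fin n2) ℂ) :
    ∃ Y : Matrix (Fin n1) (Fin n2) ℂ,
      (frobInner Y B).re = nuclearNorm B ∧ specNorm Y ≤ 1 ∧
      (∀ {k : ℕ} (U' : Matrix (Fin n1) (Fin k) ℂ), U'ᴴ * B = 0 → U'ᴴ * Y = 0) ∧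
      (∀ {k : ℕ} (V' : Matrix (Fin n2) (Fin k) ℂ), B * V' = 0 → Y * V' = 0) := by
  obtain ⟨P, d, hPP, -, hd, hB, hnuc⟩ := exists_spectral_conjTranspose_mul_self B
  refine ⟨_, hnuc ▸ re_frobInner_mul_pinv hPP hd hB, specNorm_mul_pinv_le_one hPP hd hB,
    fun U' hU' => ?_, fun V' hV' => mul_pinv_mul_eq_zero hPP hB hV'⟩
  rw [← Matrix.mul_assoc, hU', Matrix.zero_mul]

lemma nuclearNorm_PTperp_pos {U : Matrix (Fin n1) (Fin r) ℂ} {V : Matrix (Fin n2) (Fin r) ℂ}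
    {H : Matrix (Fin n1) (Fin n2) ℂ} (hH : H ≠ 0) {c : ℝ}
    (hT : frobNorm (PT U V H) ≤ c * frobNorm (PTperp U V H)) :
    0 < nuclearNorm (PTperp U V H) := by
  refine lt_of_lt_of_le ((frobNorm_nonneg _).lt_of_ne' fun h0 => hH ?_) (frobNorm_le_nuclearNorm _)
  have hT0 : PT U V H = 0 :=
    frobNorm_eq_zero.mp <| le_antisymm (by rwa [h0, mul_zero] at hT) (frobNorm_nonneg _)
  simpa [PTperp, hT0] using frobNorm_eq_zero.mp h0

open scoped MatrixOrder in
lemma nuclearNorm_eq_re_trace_sqrt (B : Matrix (Fin n1) (Fin n2) ℂ) :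
    nuclearNorm B = (CFC.sqrt (Bᴴ * B)).trace.re := by
  have hG := Matrix.posSemidef_conjTranspose_mul_self B
  rw [nuclearNorm, CFC.sqrt_eq_real_sqrt _ (Matrix.nonneg_iff_posSemidef.mpr hG),
    cfcₙ_eq_cfc (hf0 := Real.sqrt_zero), hG.1.cfc_eq, Matrix.IsHermitian.cfc,
    Unitary.conjStarAlgAut_apply]
  rfl

variable {U : Matrix (Fin n1) (Fin r) ℂ} {V : Matrix (Fin n2) (Fin r) ℂ}
  (hU : Uᴴ * U = 1) (hV : Vᴴ * V = 1)
include hU hV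

open scoped MatrixOrder in
lemma nuclearNorm_svd {σ : Fin r → ℝ} (hσ : ∀ i, 0 ≤ σ i) :
    nuclearNorm (U * Matrix.diagonal (fun i => (σ i : ℂ)) * Vᴴ) = ∑ i, σ i := by
  set D := Matrix.diagonal (fun i => (σ i : ℂ))
  have hS : Matrix.PosSemidef (V * D * Vᴴ) :=
    (Matrix.PosSemidef.diagonal fun i => by simpa using hσ i).mul_mul_conjTranspose_same V
  have hD : Dᴴ = D := by simp [D, Matrix.diagonal_conjTranspose]
  have hsq : (V * D * Vᴴ) * (V * D * Vᴴ) = (U * D * Vᴴ)ᴴ * (U * D * Vᴴ) := by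
    simp only [Matrix.conjTranspose_mul, Matrix.conjTranspose_conjTranspose, hD, Matrix.mul_assoc,
      ← Matrix.mul_assoc Uᴴ U, ← Matrix.mul_assoc Vᴴ V, hU, hV, Matrix.one_mul]
  rw [nuclearNorm_eq_re_trace_sqrt, (CFC.sqrt_eq_iff _ _ (Matrix.nonneg_iff_posSemidef.mpr
      (Matrix.posSemidef_conjTranspose_mul_self _)) (Matrix.nonneg_iff_posSemidef.mpr hS)).mpr hsq,
    trace_conj_diagonal hV]
  simp

lemma specNorm_mul_conjTranspose_add_le_one {Y : Matrix (Fin n1) (Fin n2) ℂ} (hUY : Uᴴ * Y = 0)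
    (hYV : Y * V = 0) (hY : specNorm Y ≤ 1) : specNorm (U * Vᴴ + Y) ≤ 1 := by
  have hYU : Yᴴ * U = 0 := by simpa using congrArg Matrix.conjTranspose hUY
  have hgram : (U * Vᴴ + Y)ᴴ * (U * Vᴴ + Y) = Vᴴᴴ * Vᴴ + Yᴴ * Y := by
    simp only [Matrix.conjTranspose_add, Matrix.conjTranspose_mul,
      Matrix.conjTranspose_conjTranspose, Matrix.add_mul, Matrix.mul_add, Matrix.mul_assoc,
      ← Matrix.mul_assoc Uᴴ, ← Matrix.mul_assoc Yᴴ,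
      hU, hUY, hYU, Matrix.one_mul, Matrix.zero_mul, Matrix.mul_zero, add_zero, zero_add]
  have hproj : (1 - V * Vᴴ)ᴴ * (1 - V * Vᴴ) = 1 - Vᴴᴴ * Vᴴ := by
    simp only [Matrix.conjTranspose_sub, Matrix.conjTranspose_one, Matrix.conjTranspose_mul,
      Matrix.conjTranspose_conjTranspose, Matrix.sub_mul, Matrix.mul_sub, Matrix.one_mul,
      Matrix.mul_one, Matrix.mul_assoc, ← Matrix.mul_assoc Vᴴ V, hV]
    abel
  -- `‖(UVᴴ + Y) z‖² = ‖Vᴴ z‖² + ‖Y z‖²`, and `Y` only sees the part of `z` orthogonal to the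
  -- columns of `V`, whose squared norm is `‖z‖² - ‖Vᴴ z‖²`.
  refine specNorm_le_of_forall zero_le_one fun z => ?_
  have hsum : ‖toLp 2 ((U * Vᴴ + Y) *ᵥ z)‖ ^ 2 =
      ‖toLp 2 (Vᴴ *ᵥ z)‖ ^ 2 + ‖toLp 2 (Y *ᵥ z)‖ ^ 2 := by
    rw [norm_toLp_mulVec_sq, hgram, Matrix.add_mulVec, dotProduct_add, Complex.add_re,
      norm_toLp_mulVec_sq, norm_toLp_mulVec_sq]
  have hperp :
      ‖toLp 2 ((1 - V * Vᴴ) *ᵥ z)‖ ^ 2 = ‖toLp 2 z‖ ^ 2 - ‖toLp 2 (Vᴴ *ᵥ z)‖ ^ 2 := by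
    rw [norm_toLp_mulVec_sq, hproj, Matrix.sub_mulVec, Matrix.one_mulVec, dotProduct_sub,
      Complex.sub_re, norm_toLp_sq, norm_toLp_mulVec_sq]
  have hYz : ‖toLp 2 (Y *ᵥ z)‖ ≤ ‖toLp 2 ((1 - V * Vᴴ) *ᵥ z)‖ := by
    have hYz : Y *ᵥ z = Y *ᵥ ((1 - V * Vᴴ) *ᵥ z) := by
      rw [Matrix.mulVec_mulVec, Matrix.mul_sub, Matrix.mul_one, ← Matrix.mul_assoc, hYV,
        Matrix.zero_mul, sub_zero]
    rw [hYz]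
    exact (norm_toLp_mulVec_le _ _).trans (mul_le_of_le_one_left (norm_nonneg _) hY)
  rw [one_mul]
  refine le_of_sq_le_sq ?_ (norm_nonneg _)
  nlinarith [norm_nonneg (toLp 2 (Y *ᵥ z))]

lemma frobInner_mul_conjTranspose_svd (σ : Fin r → ℝ) :
    frobInner (U * Vᴴ) (U * Matrix.diagonal (fun i => (σ i : ℂ)) * Vᴴ) =
      ∑ i, (σ i : ℂ) := by
  rw [frobInner, Matrix.conjTranspose_mul, Matrix.conjTranspose_conjTranspose, Matrix.mul_assoc,
    ← Matrix.mul_assoc Uᴴ, ← Matrix.mul_assoc Uᴴ, hU, Matrix.one_mul, ← Matrix.mul_assoc,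
    trace_conj_diagonal hV]

/-- The subgradient inequality of the nuclear norm at `UΣVᴴ`, tested against
`UVᴴ + sgn(𝒫_{T⊥} H)`. -/
lemma nuclearNorm_svd_add_ge {σ : Fin r → ℝ} (hσ : ∀ i, 0 ≤ σ i)
    (H : Matrix (Fin n1) (Fin n2) ℂ) :
    nuclearNorm (U * Matrix.diagonal (fun i => (σ i : ℂ)) * Vᴴ) + (frobInner (U * Vᴴ) H).re +
        nuclearNorm (PTperp U V H) ≤
      nuclearNorm (U * Matrix.diagonal (fun i => (σ i : ℂ)) * Vᴴ + H) := by
  set X := U * Matrix.diagonal (fun i => (σ i : ℂ)) * Vᴴ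
  obtain ⟨Y, hYH, hY, hUY, hYV⟩ := exists_sign_matrix (PTperp U V H)
  have hUY := hUY U (conjTranspose_mul_PTperp hU H)
  have hYV := hYV V (PTperp_mul hV H)
  have hYX : frobInner Y X = 0 := by
    have hYU : Yᴴ * U = 0 := by simpa using congrArg Matrix.conjTranspose hUY
    simp only [X, frobInner, Matrix.mul_assoc, ← Matrix.mul_assoc Yᴴ U, hYU, Matrix.zero_mul,
      Matrix.trace_zero]
  have hYH' : frobInner Y H = frobInner Y (PTperp U V H) := by
    rw [frobInner_eq_PT_add_PTperp hU hV, PT_eq_zero_of_mul_eq_zero U V hUY hYV, PTperp,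
      PT_eq_zero_of_mul_eq_zero U V hUY hYV, sub_zero]
    simp [frobInner]
  have hX : (frobInner (U * Vᴴ) X).re = nuclearNorm X := by
    rw [frobInner_mul_conjTranspose_svd hU hV, nuclearNorm_svd hU hV hσ, Complex.re_sum]
    simp
  have hdual := (re_frobInner_le_specNorm_mul_nuclearNorm (U * Vᴴ + Y) (X + H)).trans
    (mul_le_of_le_one_left (nuclearNorm_nonneg _)
      (specNorm_mul_conjTranspose_add_le_one hU hV hUY hYV hY))
  rw [frobInner_add_left, frobInner_add_right, frobInner_add_right, hYX, hYH'] at hdual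
  simp only [Complex.add_re, Complex.zero_re] at hdual
  linarith

lemma re_frobInner_ge_of_certificate {W H : Matrix (Fin n1) (Fin n2) ℂ}
    (hWH : frobInner W H = 0) :
    -(frobNorm (PT U V (W - U * Vᴴ)) * frobNorm (PT U V H) +
        specNorm (PTperp U V W) * nuclearNorm (PTperp U V H)) ≤ (frobInner (U * Vᴴ) H).re := by
  have h : frobInner (U * Vᴴ) H = -(frobInner (PT U V (W - U * Vᴴ)) (PT U V H) +
      frobInner (PTperp U V W) (PTperp U V H)) := by
    rw [← PTperp_sub_mul_conjTranspose hU hV W, ← frobInner_eq_PT_add_PTperp hU hV,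
      frobInner_sub_left, hWH, zero_sub, neg_neg]
  rw [h, Complex.neg_re, Complex.add_re, neg_le_neg_iff]
  exact add_le_add (re_frobInner_le _ _) (re_frobInner_le_specNorm_mul_nuclearNorm _ _)

end Subgradient

end DualCertificate

open DualCertificate in
theorem dual_certificate_unique_minimizer_general
    (n1 n2 n r m : ℕ) (hm : 0 < m)
    (A : Fin n → Matrix (Fin n1) (Fin n2) ℂ)
    (horth : ∀ k l, frobInner (A k) (A l) = if k = l then 1 else 0)
    (x : Fin n → ℂ)
    (U : Matrix (Fin n1) (Fin r) ℂ) (V : Matrix (Fin n2) (Fin r) ℂ)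
    (hU : Uᴴ * U = 1) (hV : Vᴴ * V = 1)
    (σ : Fin r → ℝ) (hσ : ∀ i, 0 < σ i)
    (hsvd : (∑ k, x k • A k) = U * Matrix.diagonal (fun i => (σ i : ℂ)) * Vᴴ)
    (ω : Fin m → Fin n)
    (hiso : opNormFro (fun M : Matrix (Fin n1) (Fin n2) ℂ =>
        ((n : ℝ) / (m : ℝ)) • PT U V (AsampMulti A ω (PT U V M)) -
          PT U V (Aproj A (PT U V M))) ≤ 1 / 2)
    (W : Matrix (Fin n1) (Fin n2) ℂ)
    (hW1 : Aproj A W - AsampSet A ω W = 0)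
    (hW2 : frobNorm (PT U V (W - U * Vᴴ)) ≤ 1 / (7 * (n : ℝ)))
    (hW3 : specNorm (PTperp U V W) ≤ 1 / 2) :
    ∀ g : Fin n → ℂ, (∀ j, g (ω j) = x (ω j)) → g ≠ x →
      nuclearNorm (∑ k, x k • A k) < nuclearNorm (∑ k, g k • A k) := by
  intro g hg hne
  obtain hn | hn := Nat.lt_or_ge n 2
  · have : Subsingleton (Fin n) := Fin.subsingleton_iff_le_one.mpr (by omega)
    exact absurd (funext fun k => Subsingleton.elim (ω ⟨0, hm⟩) k ▸ hg ⟨0, hm⟩) hne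
  set H := ∑ k, (g - x) k • A k
  have hgx : ∑ k, g k • A k = ∑ k, x k • A k + H := by
    simp [H, sub_smul, Finset.sum_sub_distrib]
  have hsampled : ∀ j, (g - x) (ω j) = 0 := fun j => by simp [hg j]
  have hT := frobNorm_PT_le_mul_frobNorm_PTperp ω horth hU hV hiso
    (AsampMulti_sum_smul_eq_zero ω horth hsampled) (Aproj_sum_smul horth _)
  have hperp := nuclearNorm_PTperp_pos (sum_smul_ne_zero horth (sub_ne_zero.mpr hne)) hT
  have hsub := nuclearNorm_svd_add_ge hU hV (fun i => (hσ i).le) H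
  have hcert := re_frobInner_ge_of_certificate hU hV
    (frobInner_sum_smul_eq_zero_of_certificate ω horth hW1 hsampled)
  have ha := frobNorm_nonneg (PT U V (W - U * Vᴴ))
  have hW2' : frobNorm (PT U V (W - U * Vᴴ)) * (2 * (n + 1)) ≤ 3 / 7 := by
    have hn' : (2 : ℝ) ≤ n := by exact_mod_cast hn
    rw [le_div_iff₀ (by positivity)] at hW2
    nlinarith
  rw [hgx, hsvd]
  linarith [mul_le_mul_of_nonneg_left hT ha,
    mul_le_mul_of_nonneg_left (frobNorm_le_nuclearNorm (PTperp U V H))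
      (mul_nonneg ha (by positivity : (0 : ℝ) ≤ 2 * (n + 1))),
    mul_le_mul_of_nonneg_right hW2' hperp.le, mul_le_mul_of_nonneg_right hW3 hperp.le]

/-- Dual certificate lemma: local isometry on the tangent space plus a
dual certificate `W` implies that `x` is the unique nuclear norm minimizer consistent
with the sampled entries. -/
theorem dual_certificate_unique_minimizer
    (n1 n2 n r m : ℕ) (hm : 0 < m)
    (A : Fin n → Matrix (Fin n1) (Fin n2) ℂ)
    (horth : ∀ k l, frobInner (A k) (A l) = if k = l then 1 else 0)
    (hLinj : Function.Injective fun v : Fin n → ℂ => ∑ k, v k • A k)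
    (x : Fin n → ℂ)
    (U : Matrix (Fin n1) (Fin r) ℂ) (V : Matrix (Fin n2) (Fin r) ℂ)
    (hU : Uᴴ * U = 1) (hV : Vᴴ * V = 1)
    (σ : Fin r → ℝ) (hσ : ∀ i, 0 < σ i)
    (hsvd : (∑ k, x k • A k) = U * Matrix.diagonal (fun i => (σ i : ℂ)) * Vᴴ)
    (ω : Fin m → Fin n)
    (hiso : opNormFro (fun M : Matrix (Fin n1) (Fin n2) ℂ =>
        ((n : ℝ) / (m : ℝ)) • PT U V (AsampMulti A ω (PT U V M)) -
          PT U V (Aproj A (PT U V M))) ≤ 1 / 2)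
    (W : Matrix (Fin n1) (Fin n2) ℂ)
    (hW1 : Aproj A W - AsampSet A ω W = 0)
    (hW2 : frobNorm (PT U V (W - U * Vᴴ)) ≤ 1 / (7 * (n : ℝ)))
    (hW3 : specNorm (PTperp U V W) ≤ 1 / 2) :
    ∀ g : Fin n → ℂ, (∀ j, g (ω j) = x (ω j)) → g ≠ x →
      nuclearNorm (∑ k, x k • A k) < nuclearNorm (∑ k, g k • A k) :=
  dual_certificate_unique_minimizer_general n1 n2 n r m hm A horth x U V hU hV σ hσ hsvd ω hiso W
    hW1 hW2 hW3
end

section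
/- Let A_1,…,A_n ∈ ℂ^{n1×n2} satisfy: (i) every nonzero entry of A_k equals ‖A_k‖₀^{−1/2}, where ‖A_k‖₀ is the number of nonzero entries of A_k; (ii) each row and each column of each A_k has at most one nonzero entry; (iii) the supports of distinct A_k are pairwise disjoint and their union is all of {1,…,n1}×{1,…,n2}; (iv) ‖A_k‖₀ = min(n1,n2) for every k. Let U ∈ ℂ^{n1×r} and V ∈ ℂ^{n2×r} have orthonormal columns with max_{1≤i≤n1} ‖Uᴴe_i‖₂² ≤ μr/n1 and max_{1≤j≤n2} ‖Vᴴe_j‖₂² ≤ μr/n2, and let 𝒫_T(M) = UUᴴM + MVVᴴ − UUᴴMVVᴴ. Define ‖M‖_{𝒜,∞} := max_{1≤k≤n} |⟨A_k, M⟩|·‖A_k‖ and ‖M‖_{𝒜,2}² := ∑_{k=1}^n |⟨A_k, M⟩|²·‖A_k‖², where ‖A_k‖ is the spectral norm. Then: (a) ‖UVᴴ‖_{𝒜,∞} ≤ μr/min(n1,n2); (b) ‖UVᴴ‖_{𝒜,2}² ≤ μr/min(n1,n2); and (c) ‖𝒫_T(‖A_k‖₀^{1/2}·A_k)‖_{𝒜,2}²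 ≤ 9μr/min(n1,n2) for every k = 1,…,n. -/
open Matrix

/-- Number of nonzero entries `‖B‖₀`. -/
noncomputable def nnz {n1 n2 : ℕ} (B : Matrix (Fin n1) (Fin n2) ℂ) : ℕ :=
  {ij : Fin n1 × Fin n2 | B ij.1 ij.2 ≠ 0}.ncard

/-!
Write `s = min n1 n2`. Each `A k` is `s^{-1/2}` times a partial permutation matrix with `s` ones,
so `‖A k‖ ≤ s^{-1/2}` and `‖A k‖_F ≤ 1`. Cauchy–Schwarz on the support of `A k` gives
`|⟨A k, M⟩|² ≤ ∑_{(i,j) ∈ supp A k} |M i j|²`, and since the supports are disjoint,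
`‖M‖²_{𝒜,2} ≤ ‖M‖²_F / s`. Hence (b) follows from `‖UVᴴ‖²_F = r ≤ μr`, and (a) from the entrywise
bound `|(UVᴴ) i j| ≤ μr / s`. For (c), `P = √s • A k₀` is a partial permutation matrix with `s`
ones; the `l`-th column of `UUᴴ` has squared norm `‖Uᴴ e_l‖² ≤ μr / n1`, so `‖UUᴴP‖²_F ≤ s μr / n1 ≤ μr`,
likewise `‖PVVᴴ‖²_F ≤ μr`, and the projection `UUᴴ` does not increase `‖PVVᴴ‖_F`. Thus
`‖𝒫_T P‖_F ≤ 3 √(μr)`.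
-/

open Finset Function

section SparseSums

variable {ι : Type*} [Fintype ι]

lemma norm_sum_sq_le_of_subsingleton_support {E : Type*} [SeminormedAddCommGroup E]
    {f : ι → E} (hf : (support f).Subsingleton) : ‖∑ i, f i‖ ^ 2 ≤ ∑ i, ‖f i‖ ^ 2 := by
  by_cases h : ∃ i₀, f i₀ ≠ 0
  · obtain ⟨i₀, hi₀⟩ := h
    rw [Fintype.sum_eq_single i₀ fun i hi => not_not.1 fun h => hi (hf h hi₀)]
    exact single_le_sum (f := fun i => ‖f i‖ ^ 2) (fun i _ => by positivity) (mem_univ i₀)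
  · push Not at h
    simp [h]

lemma sum_le_of_subsingleton_support {g : ι → ℝ} (hg : (support g).Subsingleton) {c : ℝ}
    (hc : ∀ i, g i ≤ c) (hc₀ : 0 ≤ c) : ∑ i, g i ≤ c := by
  by_cases h : ∃ i₀, g i₀ ≠ 0
  · obtain ⟨i₀, hi₀⟩ := h
    rw [Fintype.sum_eq_single i₀ fun i hi => not_not.1 fun h => hi (hg h hi₀)]
    exact hc i₀
  · push Not at h
    simpa [h] using hc₀

end SparseSums

section EntrySupport

variable {m n : Type*} [Fintype m] [Fintype n]

noncomputable def entrySupport (B : Matrix m n ℂ) : Finset (m × n) :=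
  univ.filter fun p => B p.1 p.2 ≠ 0

lemma card_entrySupport_conjTranspose (B : Matrix m n ℂ) :
    #(entrySupport Bᴴ) = #(entrySupport B) :=
  Finset.card_equiv (Equiv.prodComm _ _) fun p => by simp [entrySupport]

lemma card_entrySupport_smul_le (c : ℂ) (B : Matrix m n ℂ) :
    #(entrySupport (c • B)) ≤ #(entrySupport B) :=
  Finset.card_le_card <| Finset.monotone_filter_right _ fun _ _ h => right_ne_zero_of_mul h

end EntrySupport

lemma nnz_eq_card_entrySupport {n1 n2 : ℕ} (B : Matrix (Fin n1) (Fin n2) ℂ) :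
    nnz B = #(entrySupport B) := by
  rw [nnz, entrySupport, ← Set.ncard_coe_finset, Finset.coe_filter]
  simp only [Finset.mem_univ, true_and]

lemma frobInner_eq_sum_entrySupport {m n : ℕ} (A M : Matrix (Fin m) (Fin n) ℂ) :
    frobInner A M = ∑ p ∈ entrySupport A, star (A p.1 p.2) * M p.1 p.2 := by
  rw [entrySupport, Finset.sum_filter_of_ne fun p _ h => left_ne_zero_of_mul (by simpa using h),
    Fintype.sum_prod_type_right, frobInner, Matrix.trace]
  simp [Matrix.mul_apply]

lemma norm_frobInner_le {m n : ℕ} (A M : Matrix (Fin m) (Fin n) ℂ) :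
    ‖frobInner A M‖ ≤ ∑ p ∈ entrySupport A, ‖A p.1 p.2‖ * ‖M p.1 p.2‖ := by
  rw [frobInner_eq_sum_entrySupport]
  refine (norm_sum_le _ _).trans_eq (Finset.sum_congr rfl fun p _ => ?_)
  rw [norm_mul, norm_star]

lemma specNorm_le_of_sparse {m n : ℕ} (B : Matrix (Fin m) (Fin n) ℂ) {c : ℝ} (hc : 0 ≤ c)
    (hrow : ∀ i j j', B i j ≠ 0 → B i j' ≠ 0 → j = j')
    (hcol : ∀ i i' j, B i j ≠ 0 → B i' j ≠ 0 → i = i')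
    (hB : ∀ i j, ‖B i j‖ ≤ c) : specNorm B ≤ c := by
  refine ContinuousLinearMap.opNorm_le_bound _ hc fun x => ?_
  have hcolsum : ∀ j, ∑ i, ‖B i j‖ ^ 2 ≤ c ^ 2 := fun j =>
    sum_le_of_subsingleton_support
      (fun i hi i' hi' => hcol i i' j (by simpa using hi) (by simpa using hi'))
      (fun i => pow_le_pow_left₀ (norm_nonneg _) (hB i j) 2) (sq_nonneg c)
  refine (pow_le_pow_iff_left₀ (norm_nonneg _) (by positivity) two_ne_zero).1 ?_
  calc ‖Matrix.toEuclideanLin B x‖ ^ 2 = ∑ i, ‖∑ j, B i j * x j‖ ^ 2 :=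
        EuclideanSpace.norm_sq_eq _
    _ ≤ ∑ i, ∑ j, ‖B i j‖ ^ 2 * ‖x j‖ ^ 2 := by
      gcongr with i _
      simp_rw [← mul_pow, ← norm_mul]
      exact norm_sum_sq_le_of_subsingleton_support fun j hj j' hj' =>
        hrow i j j' (left_ne_zero_of_mul hj) (left_ne_zero_of_mul hj')
    _ = ∑ j, (∑ i, ‖B i j‖ ^ 2) * ‖x j‖ ^ 2 := by
      rw [Finset.sum_comm]
      simp_rw [Finset.sum_mul]
    _ ≤ ∑ j, c ^ 2 * ‖x j‖ ^ 2 := by gcongr with j; exact hcolsum j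
    _ = (c * ‖x‖) ^ 2 := by rw [mul_pow, EuclideanSpace.norm_sq_eq, Finset.mul_sum]

section Frobenius

open scoped Matrix.Norms.Frobenius

variable {m n l : Type*} [Fintype m] [Fintype n] [Fintype l]

lemma frobenius_norm_sq_eq_sum (M : Matrix m n ℂ) : ‖M‖ ^ 2 = ∑ i, ∑ j, ‖M i j‖ ^ 2 := by
  rw [Matrix.frobenius_norm_def, ← Real.rpow_natCast, ← Real.rpow_mul (by positivity)]
  norm_num

omit [Fintype n] in
lemma conjTranspose_mul_self_apply_self (M : Matrix m n ℂ) (j : n) :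
    (Mᴴ * M) j j = ((∑ i, ‖M i j‖ ^ 2 : ℝ) : ℂ) := by
  simp only [Matrix.mul_apply, Matrix.conjTranspose_apply, RCLike.star_def, RCLike.conj_mul,
    Complex.ofReal_sum, Complex.ofReal_pow]
  rfl

lemma trace_conjTranspose_mul_self (M : Matrix m n ℂ) :
    (Mᴴ * M).trace = ((‖M‖ ^ 2 : ℝ) : ℂ) := by
  rw [frobenius_norm_sq_eq_sum, Finset.sum_comm, Complex.ofReal_sum]
  exact Finset.sum_congr rfl fun j _ => conjTranspose_mul_self_apply_self M j

lemma frobenius_norm_mul_le_of_conjTranspose_mul_self_eq {Q : Matrix m m ℂ} (hQ : Qᴴ * Q = Q)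
    (M : Matrix m n ℂ) : ‖Q * M‖ ≤ ‖M‖ := by
  have hsa : Qᴴ = Q := by rw [← hQ, Matrix.conjTranspose_mul, Matrix.conjTranspose_conjTranspose]
  have hidem : Q * Q = Q := by rwa [hsa] at hQ
  have hpyth : ‖Q * M‖ ^ 2 + ‖M - Q * M‖ ^ 2 = ‖M‖ ^ 2 := by
    have hsum : ((Q * M)ᴴ * (Q * M)).trace + ((M - Q * M)ᴴ * (M - Q * M)).trace
        = (Mᴴ * M).trace := by
      simp only [Matrix.conjTranspose_sub, Matrix.conjTranspose_mul, hsa, Matrix.sub_mul,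
        Matrix.mul_sub, Matrix.mul_assoc, ← Matrix.mul_assoc Q Q M, hidem, ← Matrix.trace_add]
      congr 1
      abel
    simp only [trace_conjTranspose_mul_self] at hsum
    exact_mod_cast hsum
  nlinarith [norm_nonneg (Q * M), norm_nonneg M, sq_nonneg ‖M - Q * M‖]

section Isometry

variable [DecidableEq l] {U : Matrix m l ℂ}

lemma frobenius_norm_mul_of_conjTranspose_mul_self_eq_one (hU : Uᴴ * U = 1)
    (Y : Matrix l n ℂ) : ‖U * Y‖ = ‖Y‖ := by
  have h : ((U * Y)ᴴ * (U * Y)).trace = (Yᴴ * Y).trace := by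
    rw [Matrix.conjTranspose_mul, Matrix.mul_assoc, ← Matrix.mul_assoc Uᴴ, hU, Matrix.one_mul]
  simp only [trace_conjTranspose_mul_self, Complex.ofReal_inj] at h
  exact (pow_left_inj₀ (norm_nonneg _) (norm_nonneg _) two_ne_zero).1 h

lemma frobenius_norm_sq_of_conjTranspose_mul_self_eq_one (hU : Uᴴ * U = 1) :
    ‖U‖ ^ 2 = Fintype.card l := by
  have h := trace_conjTranspose_mul_self U
  rw [hU, Matrix.trace_one] at h
  exact_mod_cast h.symm

lemma card_le_mul_of_sum_norm_sq_le (hU : Uᴴ * U = 1) {b : ℝ}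
    (hb : ∀ i, ∑ c, ‖U i c‖ ^ 2 ≤ b) : (Fintype.card l : ℝ) ≤ Fintype.card m * b := by
  rw [← frobenius_norm_sq_of_conjTranspose_mul_self_eq_one hU, frobenius_norm_sq_eq_sum,
    ← nsmul_eq_mul]
  exact Finset.sum_le_card_nsmul _ _ _ fun i _ => hb i

lemma conjTranspose_mul_self_mul_conjTranspose (hU : Uᴴ * U = 1) :
    (U * Uᴴ)ᴴ * (U * Uᴴ) = U * Uᴴ := by
  rw [Matrix.conjTranspose_mul, Matrix.conjTranspose_conjTranspose, Matrix.mul_assoc,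
    ← Matrix.mul_assoc Uᴴ, hU, Matrix.one_mul]

lemma sum_norm_sq_mul_conjTranspose_apply (hU : Uᴴ * U = 1) (k : m) :
    ∑ i, ‖(U * Uᴴ) i k‖ ^ 2 = ∑ c, ‖U k c‖ ^ 2 := by
  have h := conjTranspose_mul_self_apply_self (U * Uᴴ) k
  rw [conjTranspose_mul_self_mul_conjTranspose hU] at h
  nth_rw 1 [← Matrix.conjTranspose_conjTranspose U] at h
  rw [conjTranspose_mul_self_apply_self] at h
  simp only [Matrix.conjTranspose_apply, norm_star] at h
  exact_mod_cast h.symm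

end Isometry

lemma frobenius_norm_sq_mul_le (Q : Matrix m l ℂ) (P : Matrix l n ℂ)
    (hcol : ∀ k k' j, P k j ≠ 0 → P k' j ≠ 0 → k = k') (hP : ∀ k j, ‖P k j‖ ≤ 1) {b : ℝ}
    (hQ : ∀ k, ∑ i, ‖Q i k‖ ^ 2 ≤ b) : ‖Q * P‖ ^ 2 ≤ #(entrySupport P) * b := by
  calc ‖Q * P‖ ^ 2 = ∑ i, ∑ j, ‖∑ k, Q i k * P k j‖ ^ 2 := frobenius_norm_sq_eq_sum _
    _ ≤ ∑ i, ∑ j, ∑ k, ‖Q i k‖ ^ 2 * ‖P k j‖ ^ 2 := by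
      gcongr with i _ j _
      simp_rw [← mul_pow, ← norm_mul]
      exact norm_sum_sq_le_of_subsingleton_support fun k hk k' hk' =>
        hcol k k' j (right_ne_zero_of_mul hk) (right_ne_zero_of_mul hk')
    _ = ∑ p : l × n, ‖P p.1 p.2‖ ^ 2 * ∑ i, ‖Q i p.1‖ ^ 2 := by
      simp_rw [Fintype.sum_prod_type, Finset.mul_sum, mul_comm (‖P _ _‖ ^ 2)]
      rw [Finset.sum_comm]
      conv_lhs => enter [2, j]; rw [Finset.sum_comm]
      exact Finset.sum_comm
    _ = ∑ p ∈ entrySupport P, ‖P p.1 p.2‖ ^ 2 * ∑ i, ‖Q i p.1‖ ^ 2 := by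
      rw [entrySupport, Finset.sum_filter]
      refine Finset.sum_congr rfl fun p _ => ?_
      split_ifs with h <;> simp_all
    _ ≤ #(entrySupport P) * b := by
      rw [← nsmul_eq_mul]
      refine Finset.sum_le_card_nsmul _ _ _ fun p _ => ?_
      have h1 : ‖P p.1 p.2‖ ^ 2 ≤ 1 := pow_le_one₀ (norm_nonneg _) (hP _ _)
      nlinarith [hQ p.1, Finset.sum_nonneg fun i (_ : i ∈ univ) => sq_nonneg ‖Q i p.1‖]

lemma frobenius_norm_sq_eq_sum_entrySupport (M : Matrix m n ℂ) :
    ‖M‖ ^ 2 = ∑ p ∈ entrySupport M, ‖M p.1 p.2‖ ^ 2 := by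
  rw [frobenius_norm_sq_eq_sum, ← Fintype.sum_prod_type', entrySupport,
    Finset.sum_filter_of_ne fun p _ h => by simpa using h]

lemma sum_sum_entrySupport_le {ι : Type*} [Fintype ι] (A : ι → Matrix m n ℂ)
    (hdisj : ∀ k k' i j, A k i j ≠ 0 → A k' i j ≠ 0 → k = k') {f : m × n → ℝ}
    (hf : ∀ p, 0 ≤ f p) : ∑ k, ∑ p ∈ entrySupport (A k), f p ≤ ∑ p, f p := by
  classical
  have hpd : (↑(univ : Finset ι) : Set ι).PairwiseDisjoint fun k => entrySupport (A k) :=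
    fun k _ k' _ hkk' => Finset.disjoint_left.2 fun p hp hp' =>
      hkk' (hdisj k k' p.1 p.2 (Finset.mem_filter.1 hp).2 (Finset.mem_filter.1 hp').2)
  rw [← Finset.sum_biUnion hpd]
  exact Finset.sum_le_univ_sum_of_nonneg hf

lemma norm_frobInner_sq_le {n1 n2 : ℕ} (A M : Matrix (Fin n1) (Fin n2) ℂ) :
    ‖frobInner A M‖ ^ 2 ≤ ‖A‖ ^ 2 * ∑ p ∈ entrySupport A, ‖M p.1 p.2‖ ^ 2 := by
  rw [frobenius_norm_sq_eq_sum_entrySupport]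
  exact (pow_le_pow_left₀ (norm_nonneg _) (norm_frobInner_le A M) 2).trans
    (sum_mul_sq_le_sq_mul_sq _ _ _)

lemma sum_norm_frobInner_sq_mul_specNorm_sq_le {ι : Type*} [Fintype ι] {n1 n2 : ℕ}
    (A : ι → Matrix (Fin n1) (Fin n2) ℂ)
    (hdisj : ∀ k k' i j, A k i j ≠ 0 → A k' i j ≠ 0 → k = k') {c : ℝ} (hc₀ : 0 ≤ c)
    (hc : ∀ k, ‖A k‖ ^ 2 * specNorm (A k) ^ 2 ≤ c) (M : Matrix (Fin n1) (Fin n2) ℂ) :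
    ∑ k, ‖frobInner (A k) M‖ ^ 2 * specNorm (A k) ^ 2 ≤ c * ‖M‖ ^ 2 := by
  calc ∑ k, ‖frobInner (A k) M‖ ^ 2 * specNorm (A k) ^ 2
      ≤ ∑ k, c * ∑ p ∈ entrySupport (A k), ‖M p.1 p.2‖ ^ 2 := by
        refine Finset.sum_le_sum fun k _ => ?_
        calc ‖frobInner (A k) M‖ ^ 2 * specNorm (A k) ^ 2
            ≤ ‖A k‖ ^ 2 * specNorm (A k) ^ 2 * ∑ p ∈ entrySupport (A k), ‖M p.1 p.2‖ ^ 2 := by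
              rw [mul_right_comm]
              gcongr
              exact norm_frobInner_sq_le _ _
          _ ≤ c * ∑ p ∈ entrySupport (A k), ‖M p.1 p.2‖ ^ 2 := by
              gcongr
              exact hc k
    _ = c * ∑ k, ∑ p ∈ entrySupport (A k), ‖M p.1 p.2‖ ^ 2 := by rw [Finset.mul_sum]
    _ ≤ c * ∑ p : Fin n1 × Fin n2, ‖M p.1 p.2‖ ^ 2 := by
        gcongr
        exact sum_sum_entrySupport_le A hdisj fun p => by positivity
    _ = c * ‖M‖ ^ 2 := by rw [frobenius_norm_sq_eq_sum, Fintype.sum_prod_type]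

end Frobenius

section UniformEntries

open scoped Matrix.Norms.Frobenius

variable {n1 n2 : ℕ} {B : Matrix (Fin n1) (Fin n2) ℂ}

lemma natCast_mul_inv_sqrt_sq_le_one (N : ℕ) : (N : ℝ) * (√N)⁻¹ ^ 2 ≤ 1 := by
  rw [inv_pow, Real.sq_sqrt (Nat.cast_nonneg _)]
  exact mul_inv_le_one

lemma norm_apply_le_inv_sqrt_nnz
    (hval : ∀ i j, B i j ≠ 0 → B i j = (((√(nnz B))⁻¹ : ℝ) : ℂ)) (i : Fin n1) (j : Fin n2) :
    ‖B i j‖ ≤ (√(nnz B))⁻¹ := by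
  by_cases h : B i j = 0
  · rw [h, norm_zero]
    positivity
  · rw [hval i j h, Complex.norm_real, Real.norm_of_nonneg (by positivity)]

lemma specNorm_le_inv_sqrt_nnz
    (hval : ∀ i j, B i j ≠ 0 → B i j = (((√(nnz B))⁻¹ : ℝ) : ℂ))
    (hrow : ∀ i j j', B i j ≠ 0 → B i j' ≠ 0 → j = j')
    (hcol : ∀ i i' j, B i j ≠ 0 → B i' j ≠ 0 → i = i') :
    specNorm B ≤ (√(nnz B))⁻¹ :=
  specNorm_le_of_sparse B (by positivity) hrow hcol (norm_apply_le_inv_sqrt_nnz hval)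

lemma frobenius_norm_sq_le_one
    (hval : ∀ i j, B i j ≠ 0 → B i j = (((√(nnz B))⁻¹ : ℝ) : ℂ)) : ‖B‖ ^ 2 ≤ 1 := by
  calc ‖B‖ ^ 2 = ∑ p ∈ entrySupport B, ‖B p.1 p.2‖ ^ 2 :=
        frobenius_norm_sq_eq_sum_entrySupport B
    _ ≤ ∑ _p ∈ entrySupport B, (√(nnz B))⁻¹ ^ 2 := by
        gcongr with p
        exact norm_apply_le_inv_sqrt_nnz hval _ _
    _ ≤ 1 := by
        rw [Finset.sum_const, nsmul_eq_mul, ← nnz_eq_card_entrySupport]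
        exact natCast_mul_inv_sqrt_sq_le_one _

lemma norm_frobInner_mul_specNorm_le
    (hval : ∀ i j, B i j ≠ 0 → B i j = (((√(nnz B))⁻¹ : ℝ) : ℂ))
    (hrow : ∀ i j j', B i j ≠ 0 → B i j' ≠ 0 → j = j')
    (hcol : ∀ i i' j, B i j ≠ 0 → B i' j ≠ 0 → i = i')
    {M : Matrix (Fin n1) (Fin n2) ℂ} {e : ℝ} (he₀ : 0 ≤ e) (he : ∀ i j, ‖M i j‖ ≤ e) :
    ‖frobInner B M‖ * specNorm B ≤ e := by
  have hfrob : ‖frobInner B M‖ ≤ nnz B * ((√(nnz B))⁻¹ * e) :=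
    calc ‖frobInner B M‖ ≤ ∑ p ∈ entrySupport B, ‖B p.1 p.2‖ * ‖M p.1 p.2‖ :=
          norm_frobInner_le B M
      _ ≤ ∑ _p ∈ entrySupport B, (√(nnz B))⁻¹ * e := by
          gcongr with p
          · exact norm_apply_le_inv_sqrt_nnz hval _ _
          · exact he _ _
      _ = nnz B * ((√(nnz B))⁻¹ * e) := by
          rw [Finset.sum_const, nsmul_eq_mul, nnz_eq_card_entrySupport]
  calc ‖frobInner B M‖ * specNorm B ≤ nnz B * ((√(nnz B))⁻¹ * e) * (√(nnz B))⁻¹ :=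
        mul_le_mul hfrob (specNorm_le_inv_sqrt_nnz hval hrow hcol) (norm_nonneg _)
          (by positivity)
    _ = nnz B * (√(nnz B))⁻¹ ^ 2 * e := by ring
    _ ≤ e := mul_le_of_le_one_left he₀ (natCast_mul_inv_sqrt_sq_le_one _)

lemma norm_sqrt_nnz_smul_apply_le_one
    (hval : ∀ i j, B i j ≠ 0 → B i j = (((√(nnz B))⁻¹ : ℝ) : ℂ)) (i : Fin n1) (j : Fin n2) :
    ‖(((√(nnz B) : ℝ) : ℂ) • B) i j‖ ≤ 1 := by
  rw [Matrix.smul_apply, smul_eq_mul, norm_mul, Complex.norm_real,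
    Real.norm_of_nonneg (Real.sqrt_nonneg _)]
  calc √(nnz B) * ‖B i j‖ ≤ √(nnz B) * (√(nnz B))⁻¹ := by
        gcongr
        exact norm_apply_le_inv_sqrt_nnz hval i j
    _ ≤ 1 := mul_inv_le_one

lemma sum_norm_frobInner_sq_mul_specNorm_sq_le_div {ι : Type*} [Fintype ι]
    (A : ι → Matrix (Fin n1) (Fin n2) ℂ)
    (hval : ∀ k i j, A k i j ≠ 0 → A k i j = (((√(nnz (A k)))⁻¹ : ℝ) : ℂ))
    (hrow : ∀ k i j j', A k i j ≠ 0 → A k i j' ≠ 0 → j = j')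
    (hcol : ∀ k i i' j, A k i j ≠ 0 → A k i' j ≠ 0 → i = i')
    (hdisj : ∀ k k' i j, A k i j ≠ 0 → A k' i j ≠ 0 → k = k')
    (hwrap : ∀ k, nnz (A k) = min n1 n2) (M : Matrix (Fin n1) (Fin n2) ℂ) :
    ∑ k, ‖frobInner (A k) M‖ ^ 2 * specNorm (A k) ^ 2 ≤ ‖M‖ ^ 2 / (min n1 n2 : ℕ) := by
  rw [div_eq_inv_mul]
  refine sum_norm_frobInner_sq_mul_specNorm_sq_le A hdisj (c := ((min n1 n2 : ℕ) : ℝ)⁻¹)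
    (by positivity) (fun k => ?_) M
  calc ‖A k‖ ^ 2 * specNorm (A k) ^ 2 ≤ 1 * (√(nnz (A k)))⁻¹ ^ 2 := by
        gcongr
        · exact frobenius_norm_sq_le_one (hval k)
        · exact norm_nonneg _
        · exact specNorm_le_inv_sqrt_nnz (hval k) (hrow k) (hcol k)
    _ = ((min n1 n2 : ℕ) : ℝ)⁻¹ := by
        rw [one_mul, inv_pow, Real.sq_sqrt (Nat.cast_nonneg _), hwrap]

end UniformEntries

lemma natCast_mul_div_le {t n : ℕ} (htn : t ≤ n) {x : ℝ} (hx : 0 ≤ x) :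
    (t : ℝ) * (x / n) ≤ x := by
  rcases n.eq_zero_or_pos with rfl | hn
  · simpa using hx
  · calc (t : ℝ) * (x / n) ≤ n * (x / n) := by gcongr
      _ = x := mul_div_cancel₀ _ (by positivity)

section Incoherence

open scoped Matrix.Norms.Frobenius

variable {n1 n2 r : ℕ} {U : Matrix (Fin n1) (Fin r) ℂ} {V : Matrix (Fin n2) (Fin r) ℂ} {μ : ℝ}

lemma le_mul_of_incoherent (hU : Uᴴ * U = 1) (hUinc : ∀ i, ∑ c, ‖U i c‖ ^ 2 ≤ μ * r / n1) :
    (r : ℝ) ≤ μ * r := by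
  have h := card_le_mul_of_sum_norm_sq_le hU hUinc
  simp only [Fintype.card_fin] at h
  rcases n1.eq_zero_or_pos with rfl | hn1
  · have hr : (r : ℝ) = 0 := le_antisymm (by simpa using h) (Nat.cast_nonneg r)
    simp [hr]
  · rwa [mul_div_cancel₀ _ (by positivity)] at h

lemma norm_mul_conjTranspose_apply_le (hμr : 0 ≤ μ * r)
    (hUinc : ∀ i, ∑ c, ‖U i c‖ ^ 2 ≤ μ * r / n1) (hVinc : ∀ j, ∑ c, ‖V j c‖ ^ 2 ≤ μ * r / n2)
    (i : Fin n1) (j : Fin n2) : ‖(U * Vᴴ) i j‖ ≤ μ * r / (min n1 n2 : ℕ) := by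
  have hmin : 0 < ((min n1 n2 : ℕ) : ℝ) := by exact_mod_cast Nat.lt_min.2 ⟨i.pos, j.pos⟩
  have hU : μ * r / n1 ≤ μ * r / (min n1 n2 : ℕ) :=
    div_le_div_of_nonneg_left hμr hmin (by exact_mod_cast min_le_left n1 n2)
  have hV : μ * r / n2 ≤ μ * r / (min n1 n2 : ℕ) :=
    div_le_div_of_nonneg_left hμr hmin (by exact_mod_cast min_le_right n1 n2)
  calc ‖(U * Vᴴ) i j‖ ≤ ∑ c, ‖U i c‖ * ‖V j c‖ := by
        simp only [Matrix.mul_apply, Matrix.conjTranspose_apply]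
        refine (norm_sum_le _ _).trans_eq (Finset.sum_congr rfl fun c _ => ?_)
        rw [norm_mul, norm_star]
    _ ≤ ∑ c, (‖U i c‖ ^ 2 + ‖V j c‖ ^ 2) / 2 := by
        gcongr with c
        nlinarith [sq_nonneg (‖U i c‖ - ‖V j c‖)]
    _ = (∑ c, ‖U i c‖ ^ 2 + ∑ c, ‖V j c‖ ^ 2) / 2 := by
        rw [← Finset.sum_add_distrib, Finset.sum_div]
    _ ≤ μ * r / (min n1 n2 : ℕ) := by linarith [hUinc i, hVinc j]

lemma frobenius_norm_sq_PT_le (hU : Uᴴ * U = 1) (hV : Vᴴ * V = 1) (hμr : 0 ≤ μ * r)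
    (hUinc : ∀ i, ∑ c, ‖U i c‖ ^ 2 ≤ μ * r / n1) (hVinc : ∀ j, ∑ c, ‖V j c‖ ^ 2 ≤ μ * r / n2)
    (P : Matrix (Fin n1) (Fin n2) ℂ) (hrow : ∀ i j j', P i j ≠ 0 → P i j' ≠ 0 → j = j')
    (hcol : ∀ i i' j, P i j ≠ 0 → P i' j ≠ 0 → i = i') (hP : ∀ i j, ‖P i j‖ ≤ 1)
    (hsupp : #(entrySupport P) ≤ min n1 n2) : ‖PT U V P‖ ^ 2 ≤ 9 * μ * r := by
  have hX : ‖U * Uᴴ * P‖ ^ 2 ≤ μ * r :=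
    (frobenius_norm_sq_mul_le _ P hcol hP fun k =>
      (sum_norm_sq_mul_conjTranspose_apply hU k).trans_le (hUinc k)).trans
      (natCast_mul_div_le (hsupp.trans (min_le_left _ _)) hμr)
  have hY : ‖P * (V * Vᴴ)‖ ^ 2 ≤ μ * r := by
    rw [← Matrix.frobenius_norm_conjTranspose, Matrix.conjTranspose_mul,
      (Matrix.isHermitian_mul_conjTranspose_self V).eq]
    refine (frobenius_norm_sq_mul_le _ Pᴴ (fun j j' i h h' => hrow i j j' (star_ne_zero.1 h)
      (star_ne_zero.1 h')) (fun j i => (norm_star _).trans_le (hP i j)) fun k =>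
      (sum_norm_sq_mul_conjTranspose_apply hV k).trans_le (hVinc k)).trans ?_
    rw [card_entrySupport_conjTranspose]
    exact natCast_mul_div_le (hsupp.trans (min_le_right _ _)) hμr
  have hZ : ‖U * Uᴴ * P * (V * Vᴴ)‖ ≤ ‖P * (V * Vᴴ)‖ := by
    rw [Matrix.mul_assoc]
    exact frobenius_norm_mul_le_of_conjTranspose_mul_self_eq
      (conjTranspose_mul_self_mul_conjTranspose hU) _
  have htri : ‖PT U V P‖ ≤ ‖U * Uᴴ * P‖ + 2 * ‖P * (V * Vᴴ)‖ := by
    have := norm_sub_le (U * Uᴴ * P + P * (V * Vᴴ)) (U * Uᴴ * P * (V * Vᴴ))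
    have := norm_add_le (U * Uᴴ * P) (P * (V * Vᴴ))
    rw [PT]
    linarith
  nlinarith [norm_nonneg (PT U V P), norm_nonneg (U * Uᴴ * P), norm_nonneg (P * (V * Vᴴ)),
    sq_nonneg (‖U * Uᴴ * P‖ - ‖P * (V * Vᴴ)‖)]

end Incoherence

theorem wraparound_basis_incoherence_bounds_general
    (n1 n2 n r : ℕ) (μ : ℝ)
    (A : Fin n → Matrix (Fin n1) (Fin n2) ℂ)
    (hval : ∀ k i j, A k i j ≠ 0 → A k i j = (((Real.sqrt (nnz (A k)))⁻¹ : ℝ) : ℂ))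
    (hrow : ∀ k i j j', A k i j ≠ 0 → A k i j' ≠ 0 → j = j')
    (hcol : ∀ k i i' j, A k i j ≠ 0 → A k i' j ≠ 0 → i = i')
    (hdisj : ∀ k k' i j, A k i j ≠ 0 → A k' i j ≠ 0 → k = k')
    (hwrap : ∀ k, nnz (A k) = min n1 n2)
    (U : Matrix (Fin n1) (Fin r) ℂ) (V : Matrix (Fin n2) (Fin r) ℂ)
    (hU : Uᴴ * U = 1) (hV : Vᴴ * V = 1)
    (hUinc : ∀ i, ∑ c, ‖U i c‖ ^ 2 ≤ μ * r / n1)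
    (hVinc : ∀ j, ∑ c, ‖V j c‖ ^ 2 ≤ μ * r / n2) :
    (∀ k, ‖frobInner (A k) (U * Vᴴ)‖ * specNorm (A k) ≤
        μ * r / ((min n1 n2 : ℕ) : ℝ)) ∧
      (∑ k, ‖frobInner (A k) (U * Vᴴ)‖ ^ 2 * specNorm (A k) ^ 2 ≤
        μ * r / ((min n1 n2 : ℕ) : ℝ)) ∧
      (∀ k₀, ∑ k,
          ‖frobInner (A k) (PT U V (((Real.sqrt (nnz (A k₀)) : ℝ) : ℂ) • A k₀))‖ ^ 2 *
            specNorm (A k) ^ 2 ≤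
        9 * μ * r / ((min n1 n2 : ℕ) : ℝ)) := by
  have hμr : 0 ≤ μ * r := (Nat.cast_nonneg r).trans (le_mul_of_incoherent hU hUinc)
  have hA₂ := sum_norm_frobInner_sq_mul_specNorm_sq_le_div A hval hrow hcol hdisj hwrap
  refine ⟨fun k => ?_, ?_, fun k₀ => ?_⟩
  · exact norm_frobInner_mul_specNorm_le (hval k) (hrow k) (hcol k) (by positivity)
      (norm_mul_conjTranspose_apply_le hμr hUinc hVinc)
  · refine (hA₂ (U * Vᴴ)).trans (div_le_div_of_nonneg_right ?_ (Nat.cast_nonneg _))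
    rw [frobenius_norm_mul_of_conjTranspose_mul_self_eq_one hU,
      Matrix.frobenius_norm_conjTranspose, frobenius_norm_sq_of_conjTranspose_mul_self_eq_one hV,
      Fintype.card_fin]
    exact le_mul_of_incoherent hU hUinc
  · refine (hA₂ _).trans (div_le_div_of_nonneg_right ?_ (Nat.cast_nonneg _))
    exact frobenius_norm_sq_PT_le hU hV hμr hUinc hVinc _
      (fun i j j' h h' => hrow k₀ i j j' (right_ne_zero_of_mul h) (right_ne_zero_of_mul h'))
      (fun i i' j h h' => hcol k₀ i i' j (right_ne_zero_of_mul h) (right_ne_zero_of_mul h'))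
      (norm_sqrt_nnz_smul_apply_le_one (hval k₀))
      ((card_entrySupport_smul_le _ _).trans
        ((nnz_eq_card_entrySupport _).symm.trans_le (hwrap k₀).le))

/-- Incoherence bounds in the `𝒜`-norms for a basis family with the
wrap-around property: `‖UVᴴ‖_{𝒜,∞} ≤ μr/min(n1,n2)`, `‖UVᴴ‖_{𝒜,2}² ≤ μr/min(n1,n2)`,
and `‖𝒫_T(‖A_k‖₀^{1/2} A_k)‖_{𝒜,2}² ≤ 9μr/min(n1,n2)`. -/
theorem wraparound_basis_incoherence_bounds
    (n1 n2 n r : ℕ) (μ : ℝ)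
    (A : Fin n → Matrix (Fin n1) (Fin n2) ℂ)
    (hval : ∀ k i j, A k i j ≠ 0 → A k i j = (((Real.sqrt (nnz (A k)))⁻¹ : ℝ) : ℂ))
    (hrow : ∀ k i j j', A k i j ≠ 0 → A k i j' ≠ 0 → j = j')
    (hcol : ∀ k i i' j, A k i j ≠ 0 → A k i' j ≠ 0 → i = i')
    (hdisj : ∀ k k' i j, A k i j ≠ 0 → A k' i j ≠ 0 → k = k')
    (hcover : ∀ i j, ∃ k, A k i j ≠ 0)
    (hwrap : ∀ k, nnz (A k) = min n1 n2)
    (U : Matrix (Fin n1) (Fin r) ℂ) (V : Matrix (Fin n2) (Fin r) ℂ)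
    (hU : Uᴴ * U = 1) (hV : Vᴴ * V = 1)
    (hUinc : ∀ i, ∑ c, ‖U i c‖ ^ 2 ≤ μ * r / n1)
    (hVinc : ∀ j, ∑ c, ‖V j c‖ ^ 2 ≤ μ * r / n2) :
    (∀ k, ‖frobInner (A k) (U * Vᴴ)‖ * specNorm (A k) ≤
        μ * r / ((min n1 n2 : ℕ) : ℝ)) ∧
      (∑ k, ‖frobInner (A k) (U * Vᴴ)‖ ^ 2 * specNorm (A k) ^ 2 ≤
        μ * r / ((min n1 n2 : ℕ) : ℝ)) ∧
      (∀ k₀, ∑ k,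
          ‖frobInner (A k) (PT U V (((Real.sqrt (nnz (A k₀)) : ℝ) : ℂ) • A k₀))‖ ^ 2 *
            specNorm (A k) ^ 2 ≤
        9 * μ * r / ((min n1 n2 : ℕ) : ℝ)) :=
  wraparound_basis_incoherence_bounds_general n1 n2 n r μ A hval hrow hcol hdisj hwrap U V hU hV
    hUinc hVinc
end
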